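/- arXiv:2003.04595 — 6 statements merged into one kernel-verified Lean document; each statement's English description precedes it below -/
import Mathlib

section
/- Let H be a real Hilbert space and J : H → ℝ ∪ {+∞} be a proper, convex, lower semi-continuous, absolutely one-homogeneous functional with null space N(J) = {u ∈ H : J(u) = 0}. Define the dual quantity J_*(u) = sup{⟨u, p⟩/J(p) : p ∈ N(J)^⊥, J(p) > 0}. Then for every u ∈ N(J)^⊥ with 0 < J(u) < ∞ one has J_*(u) ≥ ‖u‖²/J(u), and equality holds if and only if u is an eigenvector of ∂J, i.e., λ u ∈ ∂J(u) for λ = J(u)/‖u‖². -/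
/-! Taking `p = u` in the supremum gives the lower bound. With `λ = J(u)/‖u‖²`, the reverse bound
`J_*(u) ≤ ‖u‖²/J(u)` says `λ⟪u, p⟫ ≤ J(p)` for all `p ∈ N(J)^⊥`, whereas `λu ∈ ∂J(u)` says the same
for all `p ∈ H`, since `λ‖u‖² = J(u)`. The two agree: convexity and homogeneity make `J` subadditive,
hence invariant under translation by `N(J)`, a subspace that lower semicontinuity makes closed, so
every `v` splits as `n + q` with `n ∈ N(J)`, `q ∈ N(J)^⊥`, `J v = J q` and `⟪u, v⟫ = ⟪u, q⟫`. -/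

open scoped RealInnerProductSpace

noncomputable section

variable {H : Type*} [NormedAddCommGroup H] [InnerProductSpace ℝ H] [CompleteSpace H]

/-- `J` is absolutely one-homogeneous: `J (c • u) = |c| * J u` for `c ≠ 0`, and `J 0 = 0`. -/
def AbsOneHom (J : H → EReal) : Prop :=
  J 0 = 0 ∧ ∀ c : ℝ, c ≠ 0 → ∀ u : H, J (c • u) = ((|c| : ℝ) : EReal) * J u

/-- Convexity of an extended-real-valued functional. -/
def ConvexFn (J : H → EReal) : Prop :=
  ∀ x y : H, ∀ t : ℝ, 0 ≤ t → t ≤ 1 →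
    J (t • x + (1 - t) • y) ≤ ((t : ℝ) : EReal) * J x + (((1 - t) : ℝ) : EReal) * J y

/-- `J` is proper: it never takes the value `⊥` and is not identically `⊤`. -/
def ProperFn (J : H → EReal) : Prop := (∀ u : H, J u ≠ ⊥) ∧ ∃ u : H, J u ≠ ⊤

/-- `u` is orthogonal to the null space `N(J) = {n : J n = 0}` of `J`. -/
def InNullPerp (J : H → EReal) (u : H) : Prop := ∀ n : H, J n = 0 → ⟪u, n⟫ = 0

/-- The objective `v ↦ ½‖v - u‖² + α J(v)` of the proximal problem for `J`. -/
def ProxObj (J : H → EReal) (α : ℝ) (u v : H) : EReal :=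
  (((2 : ℝ)⁻¹ * ‖v - u‖ ^ 2 : ℝ) : EReal) + (α : EReal) * J v

/-- `v` is a minimizer of `w ↦ ½‖w - u‖² + α J(w)`, i.e. `v = prox_α^J(u)`
(the minimizer is unique by strict convexity). -/
def IsProxPt (J : H → EReal) (α : ℝ) (u v : H) : Prop :=
  ∀ w : H, ProxObj J α u v ≤ ProxObj J α u w

/-- The dual quantity `J_*(u) = sup { ⟪u,p⟫ / J(p) : p ∈ N(J)^⊥, J(p) > 0 }`. -/
def Jdual (J : H → EReal) (u : H) : EReal :=
  ⨆ p : {p : H // InNullPerp J p ∧ 0 < J p}, ((⟪u, (p : H)⟫ : ℝ) : EReal) / J (p : H)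

/-- `p` belongs to the subdifferential `∂J(u)`. -/
def InSubdiff (J : H → EReal) (u p : H) : Prop :=
  ∀ v : H, J u + ((⟪p, v - u⟫ : ℝ) : EReal) ≤ J v

lemma EReal.coe_div_le_coe_iff (x : ℝ) {b : EReal} (hb : 0 < b) {c : ℝ} (hc : 0 < c) :
    (x : EReal) / b ≤ c ↔ ((c⁻¹ * x : ℝ) : EReal) ≤ b := by
  rcases eq_or_ne b ⊤ with rfl | hb_top
  · simp [EReal.div_top, hc.le]
  lift b to ℝ using ⟨hb_top, ne_bot_of_gt hb⟩
  have hb : 0 < b := EReal.coe_pos.mp hb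
  rw [← EReal.coe_div, EReal.coe_le_coe_iff, EReal.coe_le_coe_iff, div_le_iff₀ hb,
    inv_mul_le_iff₀ hc, mul_comm]

section

variable {E : Type*} [NormedAddCommGroup E] [InnerProductSpace ℝ E] {J : E → EReal}

lemma AbsOneHom.apply_neg (hhom : AbsOneHom J) (x : E) : J (-x) = J x := by
  simpa using hhom.2 (-1) (by norm_num) x

namespace ConvexFn

lemma nonneg (hconv : ConvexFn J) (hhom : AbsOneHom J) (x : E) : 0 ≤ J x := by
  have h := hconv x (-x) (1 / 2) (by norm_num) (by norm_num)
  have hmid : (1 / 2 : ℝ) • x + (1 - 1 / 2 : ℝ) • -x = 0 := by module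
  have hweights : (1 / 2 : ℝ) + (1 - 1 / 2) = 1 := by norm_num
  rwa [hmid, hhom.1, hhom.apply_neg, ← EReal.right_distrib_of_nonneg (by norm_num) (by norm_num),
    ← EReal.coe_add, hweights, EReal.coe_one, one_mul] at h

lemma add_le (hconv : ConvexFn J) (hhom : AbsOneHom J) (x y : E) : J (x + y) ≤ J x + J y := by
  set m := (1 / 2 : ℝ) • x + (1 - 1 / 2 : ℝ) • y
  have hdouble : J (x + y) = ((|2| : ℝ) : EReal) * J m := by
    rw [← hhom.2 2 two_ne_zero m]; congr 1; module
  have hhalf : ((|2| : ℝ) : EReal) * ((1 / 2 : ℝ) : EReal) = 1 := by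
    rw [← EReal.coe_mul]; norm_num
  have hhalf' : ((|2| : ℝ) : EReal) * ((1 - 1 / 2 : ℝ) : EReal) = 1 := by
    rw [← EReal.coe_mul]; norm_num
  calc J (x + y) = ((|2| : ℝ) : EReal) * J m := hdouble
    _ ≤ ((|2| : ℝ) : EReal) * (((1 / 2 : ℝ) : EReal) * J x + ((1 - 1 / 2 : ℝ) : EReal) * J y) :=
      mul_le_mul_of_nonneg_left (hconv x y _ (by norm_num) (by norm_num))
        (EReal.coe_nonneg.mpr (abs_nonneg _))
    _ = J x + J y := by
      rw [EReal.left_distrib_of_nonneg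
          (EReal.mul_nonneg (by norm_num) (hconv.nonneg hhom x))
          (EReal.mul_nonneg (by norm_num) (hconv.nonneg hhom y)),
        ← mul_assoc, ← mul_assoc, hhalf, hhalf', one_mul, one_mul]

lemma apply_add_of_eq_zero (hconv : ConvexFn J) (hhom : AbsOneHom J) {n : E} (hn : J n = 0)
    (q : E) : J (q + n) = J q := by
  refine le_antisymm ?_ ?_
  · simpa [hn] using hconv.add_le hhom q n
  · simpa [hn, hhom.apply_neg] using hconv.add_le hhom (q + n) (-n)

def nullSpace (hconv : ConvexFn J) (hhom : AbsOneHom J) : Submodule ℝ E where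
  carrier := {n | J n = 0}
  zero_mem' := hhom.1
  add_mem' {x _} hx hy := (hconv.apply_add_of_eq_zero hhom hy x).trans hx
  smul_mem' c x hx := by
    rcases eq_or_ne c 0 with rfl | hc
    · simpa using hhom.1
    · show J (c • x) = 0
      rw [hhom.2 c hc x, show J x = 0 from hx, mul_zero]

lemma isClosed_nullSpace (hconv : ConvexFn J) (hhom : AbsOneHom J)
    (hlsc : LowerSemicontinuous J) : IsClosed (hconv.nullSpace hhom : Set E) := by
  have : (hconv.nullSpace hhom : Set E) = J ⁻¹' Set.Iic 0 := by
    ext n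
    exact ⟨le_of_eq, fun h => le_antisymm h (hconv.nonneg hhom n)⟩
  rw [this]
  exact hlsc.isClosed_preimage 0

end ConvexFn

lemma InNullPerp.eq_zero_of_apply_eq_zero {p : E} (hp : InNullPerp J p) (h : J p = 0) : p = 0 :=
  inner_self_eq_zero.mp (hp p h)

lemma inSubdiff_smul_iff {u : E} {lam : ℝ} (hu : J u = ((lam * ‖u‖ ^ 2 : ℝ) : EReal)) :
    InSubdiff J u (lam • u) ↔ ∀ v, ((lam * ⟪u, v⟫ : ℝ) : EReal) ≤ J v := by
  have hlhs (v : E) : J u + ((⟪lam • u, v - u⟫ : ℝ) : EReal) = ((lam * ⟪u, v⟫ : ℝ) : EReal) := by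
    rw [hu, ← EReal.coe_add, real_inner_smul_left, inner_sub_right, real_inner_self_eq_norm_sq]
    ring_nf
  simp only [InSubdiff, hlhs]

lemma jdual_le_iff (hconv : ConvexFn J) (hhom : AbsOneHom J) (u : E) {c : ℝ} (hc : 0 < c) :
    Jdual J u ≤ c ↔ ∀ p, InNullPerp J p → ((c⁻¹ * ⟪u, p⟫ : ℝ) : EReal) ≤ J p := by
  simp only [Jdual, iSup_le_iff, Subtype.forall, and_imp]
  refine forall_congr' fun p => forall_congr' fun hp => ?_
  rcases (hconv.nonneg hhom p).eq_or_lt with hzero | hpos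
  · simp [hp.eq_zero_of_apply_eq_zero hzero.symm, hhom.1]
  · simp only [hpos, forall_true_left, EReal.coe_div_le_coe_iff _ hpos hc]

lemma forall_le_of_forall_inNullPerp [CompleteSpace E] (hconv : ConvexFn J) (hhom : AbsOneHom J)
    (hlsc : LowerSemicontinuous J) {u : E} (hu : InNullPerp J u) {lam : ℝ}
    (h : ∀ p, InNullPerp J p → ((lam * ⟪u, p⟫ : ℝ) : EReal) ≤ J p) (v : E) :
    ((lam * ⟪u, v⟫ : ℝ) : EReal) ≤ J v := by
  set N := hconv.nullSpace hhom
  have : CompleteSpace N := (hconv.isClosed_nullSpace hhom hlsc).completeSpace_coe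
  obtain ⟨n, hn, q, hq, rfl⟩ := N.exists_add_mem_mem_orthogonal v
  rw [add_comm, hconv.apply_add_of_eq_zero hhom hn, inner_add_right, hu n hn, add_zero]
  exact h q fun m hm => real_inner_comm m q ▸ N.inner_right_of_mem_orthogonal hm hq

end

theorem jdual_ge_and_eq_iff_eigenvector_general
    (J : H → EReal) (hconv : ConvexFn J)
    (hlsc : LowerSemicontinuous J) (hhom : AbsOneHom J)
    (u : H) (hu : InNullPerp J u) (hJpos : 0 < J u) (hJfin : J u ≠ ⊤) :
    ((‖u‖ ^ 2 : ℝ) : EReal) / J u ≤ Jdual J u ∧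
    (Jdual J u = ((‖u‖ ^ 2 : ℝ) : EReal) / J u ↔
      InSubdiff J u (((J u).toReal / ‖u‖ ^ 2) • u)) := by
  obtain ⟨a, ha⟩ : ∃ a : ℝ, J u = a :=
    ⟨(J u).toReal, (EReal.coe_toReal hJfin (ne_bot_of_gt hJpos)).symm⟩
  have ha_pos : 0 < a := EReal.coe_pos.mp (ha ▸ hJpos)
  have hu_ne : u ≠ 0 := by rintro rfl; exact hJpos.ne' hhom.1
  have hnorm_pos : 0 < ‖u‖ ^ 2 := by positivity
  set c := ‖u‖ ^ 2 / a
  have hbound : ((‖u‖ ^ 2 : ℝ) : EReal) / J u = c := by rw [ha, EReal.coe_div]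
  have hself : (c : EReal) ≤ Jdual J u :=
    le_iSup_of_le (⟨u, hu, hJpos⟩ : {p : H // InNullPerp J p ∧ 0 < J p})
      (by rw [← hbound, real_inner_self_eq_norm_sq])
  have heigen : J u = ((c⁻¹ * ‖u‖ ^ 2 : ℝ) : EReal) := by
    rw [ha, inv_div, div_mul_cancel₀ _ hnorm_pos.ne']
  rw [hbound, ha, EReal.toReal_coe, ← inv_div, le_antisymm_iff, and_iff_left hself,
    jdual_le_iff hconv hhom u (by positivity), inSubdiff_smul_iff heigen]
  exact ⟨hself, forall_le_of_forall_inNullPerp hconv hhom hlsc hu, fun h p _ => h p⟩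

/-- **Lower bound for the dual quantity and eigenvector characterization.**
For proper, convex, lsc, absolutely one-homogeneous `J` and `u ∈ N(J)^⊥` with
`0 < J u < ∞`, one has `J_*(u) ≥ ‖u‖² / J(u)`, and equality holds iff `u` is an
eigenvector of `∂J`, i.e. `λ • u ∈ ∂J(u)` for `λ = J(u)/‖u‖²`. -/
theorem jdual_ge_and_eq_iff_eigenvector
    (J : H → EReal) (hproper : ProperFn J) (hconv : ConvexFn J)
    (hlsc : LowerSemicontinuous J) (hhom : AbsOneHom J)
    (u : H) (hu : InNullPerp J u) (hJpos : 0 < J u) (hJfin : J u ≠ ⊤) :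
    ((‖u‖ ^ 2 : ℝ) : EReal) / J u ≤ Jdual J u ∧
    (Jdual J u = ((‖u‖ ^ 2 : ℝ) : EReal) / J u ↔
      InSubdiff J u (((J u).toReal / ‖u‖ ^ 2) • u)) :=
  jdual_ge_and_eq_iff_eigenvector_general J hconv hlsc hhom u hu hJpos hJfin

end
end

section
/- Let H be a real Hilbert space and J : H → ℝ ∪ {+∞} be a proper, convex, lower semi-continuous, absolutely one-homogeneous functional with null space N(J) = {u : J(u) = 0}. For u ∈ N(J)^⊥ with 0 < J(u) < ∞ and α > 0, let prox_α^J(u) denote the unique minimizer of v ↦ ½‖v − u‖² + αJ(v). Then prox_α^J(u) = 0 if and only if α ≥ J_*(u), where J_*(u) = sup{⟨u, p⟩/J(p) : p ∈ N(J)^⊥, J(p) > 0}. -/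
open scoped RealInnerProductSpace

noncomputable section

variable {H : Type*} [NormedAddCommGroup H] [InnerProductSpace ℝ H] [CompleteSpace H]

/-! One-homogeneity and convexity make `J` a nonnegative, subadditive seminorm, so `N(J)` is a
subspace, closed by lower semicontinuity, and `J` is invariant under translations by `N(J)`.
Expanding the square, `prox_α^J(u) = 0` means `⟪u, w⟫ ≤ ½‖w‖² + α J(w)` for all `w`; testing with
`t • w` and letting `t → 0⁺` removes the quadratic term, leaving `⟪u, w⟫ ≤ α J(w)`. Projecting `w`
onto `N(J)^⊥` changes neither side, so it suffices to test `p ∈ N(J)^⊥` with `J(p) > 0`, which is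
`J_*(u) ≤ α`. -/

section

variable {E : Type*} [NormedAddCommGroup E] [InnerProductSpace ℝ E]

theorem EReal.coe_div_le_iff {x a : ℝ} {b : EReal} (ha : 0 < a) (hb : 0 < b) :
    (x : EReal) / b ≤ a ↔ (x : EReal) ≤ a * b := by
  rcases eq_or_ne b ⊤ with rfl | hb'
  · simp [EReal.mul_top_of_pos (EReal.coe_pos.2 ha), ha.le]
  · rw [EReal.div_le_iff_le_mul hb hb', mul_comm]

namespace AbsOneHom

variable {J : E → EReal}

theorem map_neg (hhom : AbsOneHom J) (v : E) : J (-v) = J v := by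
  simpa using hhom.2 (-1) (by norm_num) v

theorem nonneg (hhom : AbsOneHom J) (hconv : ConvexFn J) (v : E) : 0 ≤ J v := by
  have h := hconv v (-v) 2⁻¹ (by norm_num) (by norm_num)
  rwa [show (2⁻¹ : ℝ) • v + (1 - 2⁻¹ : ℝ) • -v = 0 by module, hhom.1, hhom.map_neg,
    ← EReal.right_distrib_of_nonneg (by norm_num) (by norm_num), ← EReal.coe_add,
    show (2⁻¹ + (1 - 2⁻¹) : ℝ) = 1 by norm_num, EReal.coe_one, one_mul] at h

theorem ne_bot (hhom : AbsOneHom J) (hconv : ConvexFn J) (v : E) : J v ≠ ⊥ :=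
  (EReal.bot_lt_zero.trans_le (hhom.nonneg hconv v)).ne'

theorem map_add_le (hhom : AbsOneHom J) (hconv : ConvexFn J) (a b : E) :
    J (a + b) ≤ J a + J b := by
  have hmid := hconv a b 2⁻¹ (by norm_num) (by norm_num)
  calc J (a + b) = ((2 : ℝ) : EReal) * J ((2⁻¹ : ℝ) • a + (1 - 2⁻¹ : ℝ) • b) := by
        rw [← abs_two, ← hhom.2 2 two_ne_zero]; congr 1; module
    _ ≤ ((2 : ℝ) : EReal) * ((2⁻¹ : ℝ) * J a + ((1 - 2⁻¹ : ℝ) : EReal) * J b) :=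
        mul_le_mul_of_nonneg_left hmid (by norm_num)
    _ = J a + J b := by
        rw [EReal.left_distrib_of_nonneg_of_ne_top (by norm_num) (EReal.coe_ne_top 2),
          ← mul_assoc, ← mul_assoc, ← EReal.coe_mul, ← EReal.coe_mul]
        norm_num

theorem map_add_of_eq_zero (hhom : AbsOneHom J) (hconv : ConvexFn J) {n : E} (hn : J n = 0)
    (v : E) : J (v + n) = J v := by
  apply le_antisymm
  · simpa [hn] using hhom.map_add_le hconv v n
  · simpa [hn, hhom.map_neg] using hhom.map_add_le hconv (v + n) (-n)

def nullSubmodule (hhom : AbsOneHom J) (hconv : ConvexFn J) : Submodule ℝ E where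
  carrier := {n | J n = 0}
  zero_mem' := hhom.1
  add_mem' {a b} (ha : J a = 0) (hb : J b = 0) := show J (a + b) = 0 by
    rw [hhom.map_add_of_eq_zero hconv hb, ha]
  smul_mem' c n (hn : J n = 0) := show J (c • n) = 0 by
    rcases eq_or_ne c 0 with rfl | hc
    · rw [zero_smul, hhom.1]
    · rw [hhom.2 c hc, hn, mul_zero]

theorem isClosed_nullSubmodule (hhom : AbsOneHom J) (hconv : ConvexFn J)
    (hlsc : LowerSemicontinuous J) : IsClosed (hhom.nullSubmodule hconv : Set E) := by
  have : (hhom.nullSubmodule hconv : Set E) = J ⁻¹' Set.Iic 0 := by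
    ext n
    exact ⟨le_of_eq, fun h => le_antisymm h (hhom.nonneg hconv n)⟩
  rw [this]
  exact hlsc.isClosed_preimage 0

theorem exists_inNullPerp_add_eq [CompleteSpace E] (hhom : AbsOneHom J) (hconv : ConvexFn J)
    (hlsc : LowerSemicontinuous J) (w : E) :
    ∃ p n, InNullPerp J p ∧ J n = 0 ∧ p + n = w := by
  set K := hhom.nullSubmodule hconv
  have : CompleteSpace K := (hhom.isClosed_nullSubmodule hconv hlsc).completeSpace_coe
  refine ⟨w - K.starProjection w, K.starProjection w, fun n hn => ?_,
    K.starProjection_apply_mem w, sub_add_cancel _ _⟩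
  rw [real_inner_comm]
  exact K.sub_starProjection_mem_orthogonal w n hn

theorem isProxPt_zero_iff (hhom : AbsOneHom J) (hconv : ConvexFn J) {α : ℝ} (hα : 0 < α)
    (u : E) :
    IsProxPt J α u 0 ↔ ∀ w, (⟪u, w⟫ : EReal) ≤ ((2⁻¹ * ‖w‖ ^ 2 : ℝ) : EReal) + α * J w := by
  refine forall_congr' fun w => ?_
  rw [ProxObj, ProxObj, hhom.1, mul_zero, add_zero, zero_sub, norm_neg]
  rcases eq_or_ne (J w) ⊤ with htop | hfin
  · simp only [htop, EReal.mul_top_of_pos (EReal.coe_pos.2 hα),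
      EReal.add_top_of_ne_bot (EReal.coe_ne_bot _), le_top]
  · lift J w to ℝ using ⟨hfin, hhom.ne_bot hconv w⟩ with r
    norm_cast
    rw [norm_sub_sq_real, real_inner_comm]
    constructor <;> intro h <;> linarith

open Filter Topology in
theorem forall_inner_le_half_sq_add_iff (hhom : AbsOneHom J) (hconv : ConvexFn J) {α : ℝ}
    (hα : 0 < α) (u : E) :
    (∀ w, (⟪u, w⟫ : EReal) ≤ ((2⁻¹ * ‖w‖ ^ 2 : ℝ) : EReal) + α * J w) ↔
      ∀ w, (⟪u, w⟫ : EReal) ≤ α * J w := by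
  refine ⟨fun h w => ?_, fun h w => (h w).trans (le_add_of_nonneg_left (by positivity))⟩
  rcases eq_or_ne (J w) ⊤ with htop | hfin
  · simp [htop, EReal.mul_top_of_pos (EReal.coe_pos.2 hα)]
  lift J w to ℝ using ⟨hfin, hhom.ne_bot hconv w⟩ with r hr
  norm_cast
  have hscaled : ∀ t > 0, ⟪u, w⟫ ≤ 2⁻¹ * t * ‖w‖ ^ 2 + α * r := by
    intro t ht
    have := h (t • w)
    rw [hhom.2 t ht.ne', abs_of_pos ht, ← hr, inner_smul_right, norm_smul,
      Real.norm_of_nonneg ht.le] at this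
    norm_cast at this
    refine le_of_mul_le_mul_left ?_ ht
    linarith
  have hlim : Tendsto (fun t => 2⁻¹ * t * ‖w‖ ^ 2 + α * r) (𝓝[>] 0) (𝓝 (α * r)) :=
    tendsto_nhdsWithin_of_tendsto_nhds (Continuous.tendsto' (by fun_prop) 0 _ (by simp))
  exact ge_of_tendsto hlim (eventually_nhdsWithin_of_forall hscaled)

theorem jdual_le_iff [CompleteSpace E] (hhom : AbsOneHom J) (hconv : ConvexFn J)
    (hlsc : LowerSemicontinuous J) {u : E} (hu : InNullPerp J u) {α : ℝ} (hα : 0 < α) :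
    Jdual J u ≤ α ↔ ∀ w, (⟪u, w⟫ : EReal) ≤ α * J w := by
  simp only [Jdual, iSup_le_iff, Subtype.forall, and_imp]
  refine ⟨fun h w => ?_, fun h p _ hp => (EReal.coe_div_le_iff hα hp).2 (h p)⟩
  obtain ⟨p, n, hp, hn, rfl⟩ := hhom.exists_inNullPerp_add_eq hconv hlsc w
  rw [hhom.map_add_of_eq_zero hconv hn, inner_add_right, hu n hn, add_zero]
  rcases (hhom.nonneg hconv p).eq_or_lt with hzero | hpos
  · rw [hu p hzero.symm, ← hzero]
    simp
  · exact (EReal.coe_div_le_iff hα hpos).1 (h p hp hpos)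

end AbsOneHom

end

theorem prox_eq_zero_iff_general
    (J : H → EReal) (hconv : ConvexFn J) (hlsc : LowerSemicontinuous J) (hhom : AbsOneHom J)
    (u : H) (hu : InNullPerp J u) (α : ℝ) (hα : 0 < α) :
    IsProxPt J α u 0 ↔ Jdual J u ≤ (α : EReal) := by
  rw [hhom.isProxPt_zero_iff hconv hα, hhom.forall_inner_le_half_sq_add_iff hconv hα,
    hhom.jdual_le_iff hconv hlsc hu hα]

/-- **Vanishing of the proximal operator.**
For proper, convex, lsc, absolutely one-homogeneous `J`, `u ∈ N(J)^⊥` with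
`0 < J u < ∞` and `α > 0`, one has `prox_α^J(u) = 0` (i.e. `0` is the unique
minimizer of `v ↦ ½‖v-u‖² + αJ(v)`) if and only if `α ≥ J_*(u)`. -/
theorem prox_eq_zero_iff
    (J : H → EReal) (hproper : ProperFn J) (hconv : ConvexFn J)
    (hlsc : LowerSemicontinuous J) (hhom : AbsOneHom J)
    (u : H) (hu : InNullPerp J u) (hJpos : 0 < J u) (hJfin : J u ≠ ⊤)
    (α : ℝ) (hα : 0 < α) :
    IsProxPt J α u 0 ↔ Jdual J u ≤ (α : EReal) :=
  prox_eq_zero_iff_general J hconv hlsc hhom u hu α hα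
end
end

section
/- Let H be a real Hilbert space and J : H → ℝ ∪ {+∞} be a proper, convex, lower semi-continuous, absolutely one-homogeneous functional. Let u ∈ N(J)^⊥ \ {0}, let α satisfy 0 < α < J_*(u), and let v = prox_α^J(u). Then v ≠ 0 and J(v)/‖v‖ ≤ J(u)/‖u‖, with equality if and only if λ u ∈ ∂J(u) for λ = J(u)/‖u‖². -/
open scoped RealInnerProductSpace

/-! The proximal point satisfies the variational inequality `⟪u - v, w - v⟫ ≤ α (J w - J v)`;
testing it at `0` and `2 • v` gives `⟪u - v, v⟫ = α J v`. Comparing the prox objective at `v`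
with its value at the rescaled point `(‖v‖ / ‖u‖) • u`, which has the same norm as `v`, gives
`α J(v) ‖u‖ + ‖u‖ (‖u‖ ‖v‖ - ⟪u, v⟫) ≤ α J(u) ‖v‖`, hence the decrease of the Rayleigh quotient
by Cauchy–Schwarz. Equality forces `v` to be a positive multiple of `u`, and the variational
inequality then says that `λ u` is a subgradient. Conversely, if `λ u ∈ ∂J(u)` then
`prox_α^J(u) = (1 - αλ) u`, which has the same Rayleigh quotient as `u`. A witness `p` of
`α < J_*(u)`, i.e. `α J(p) < ⟪u, p⟫`, makes `αλ < 1`, and rules out `v = 0` because the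
variational inequality at `v = 0` reads `⟪u, p⟫ ≤ α J(p)`. -/

open Filter Topology

theorem EReal.exists_eq_coe_of_nonneg_of_ne_top {x : EReal} (h0 : 0 ≤ x) (h : x ≠ ⊤) :
    ∃ r : ℝ, x = r :=
  ⟨_, (EReal.coe_toReal h (ne_bot_of_le_ne_bot EReal.zero_ne_bot h0)).symm⟩

theorem nonneg_of_forall_nonneg_add_mul {A B : ℝ}
    (h : ∀ t : ℝ, 0 < t → t ≤ 1 → 0 ≤ A + t * B) : 0 ≤ A := by
  have hlim : Tendsto (fun t : ℝ => A + t * B) (𝓝[>] 0) (𝓝 A) := by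
    have : Continuous fun t : ℝ => A + t * B := by fun_prop
    simpa using (this.tendsto 0).mono_left nhdsWithin_le_nhds
  refine ge_of_tendsto hlim ?_
  filter_upwards [Ioc_mem_nhdsGT one_pos] with t ht using h t ht.1 ht.2

section

variable {H : Type*} [NormedAddCommGroup H] {J : H → EReal} {α : ℝ} {u v : H}

theorem IsProxPt.objective_le (hv : IsProxPt J α u v) {w : H} {b r : ℝ} (hJv : J v = b)
    (hJw : J w = r) : 2⁻¹ * ‖v - u‖ ^ 2 + α * b ≤ 2⁻¹ * ‖w - u‖ ^ 2 + α * r := by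
  have h := hv w
  rw [ProxObj, ProxObj, hJv, hJw] at h
  exact_mod_cast h

theorem IsProxPt.apply_ne_top (hJ0 : J 0 = 0) (hα : 0 < α) (hv : IsProxPt J α u v) :
    J v ≠ ⊤ := by
  intro htop
  have h := hv 0
  rw [ProxObj, ProxObj, htop, hJ0, EReal.mul_top_of_pos (by exact_mod_cast hα),
    EReal.coe_add_top, mul_zero] at h
  exact EReal.coe_ne_top _ (top_le_iff.mp h)

variable [InnerProductSpace ℝ H]

theorem AbsOneHom.map_smul_of_nonneg (hhom : AbsOneHom J) {c : ℝ} (hc : 0 ≤ c) (w : H) :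
    J (c • w) = c * J w := by
  rcases hc.eq_or_lt with rfl | hc
  · simp [hhom.1]
  · rw [hhom.2 c hc.ne' w, abs_of_pos hc]

theorem ConvexFn.nonneg_of_absOneHom (hconv : ConvexFn J) (hhom : AbsOneHom J) (w : H) :
    0 ≤ J w := by
  have hneg : J (-w) = J w := by simpa using hhom.2 (-1) (by norm_num) w
  have h := hconv w (-w) 2⁻¹ (by norm_num) (by norm_num)
  rw [show (2⁻¹ : ℝ) • w + (1 - 2⁻¹ : ℝ) • -w = 0 by module, hhom.1, hneg] at h
  generalize J w = x at h
  induction x using EReal.rec with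
  | bot => simp [EReal.coe_mul_bot_of_pos] at h
  | coe x =>
    norm_cast at h ⊢
    linarith
  | top => exact le_top

theorem ConvexFn.exists_eq_coe_le (hconv : ConvexFn J) (hJ : ∀ w, 0 ≤ J w) {x y : H}
    {r s t : ℝ} (hx : J x = r) (hy : J y = s) (ht0 : 0 ≤ t) (ht1 : t ≤ 1) :
    ∃ q : ℝ, J (t • x + (1 - t) • y) = q ∧ q ≤ t * r + (1 - t) * s := by
  have h := hconv x y t ht0 ht1
  rw [hx, hy] at h
  norm_cast at h
  obtain ⟨q, hq⟩ :=
    EReal.exists_eq_coe_of_nonneg_of_ne_top (hJ _) (ne_top_of_le_ne_top (EReal.coe_ne_top _) h)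
  exact ⟨q, hq, by exact_mod_cast hq ▸ h⟩

theorem not_inSubdiff_of_eq_top (hJ0 : J 0 = 0) (hJu : J u = ⊤) (p : H) : ¬InSubdiff J u p := by
  intro h
  simpa [hJu, hJ0] using h 0

theorem inSubdiff_iff_of_eq_inner {p : H} (h : J u = ⟪p, u⟫) :
    InSubdiff J u p ↔ ∀ w, (⟪p, w⟫ : EReal) ≤ J w := by
  simp only [InSubdiff, h, inner_sub_right, ← EReal.coe_add, add_sub_cancel]

theorem inSubdiff_div_norm_sq_smul_iff (hu0 : u ≠ 0) {a : ℝ} (hJu : J u = a) :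
    InSubdiff J u ((a / ‖u‖ ^ 2) • u) ↔ ∀ w, ((a / ‖u‖ ^ 2 * ⟪u, w⟫ : ℝ) : EReal) ≤ J w := by
  have hnu : ‖u‖ ≠ 0 := norm_ne_zero_iff.mpr hu0
  rw [inSubdiff_iff_of_eq_inner]
  · simp only [real_inner_smul_left]
  · rw [hJu, real_inner_smul_left, real_inner_self_eq_norm_sq, div_mul_cancel₀ _ (by positivity)]

theorem exists_mul_lt_inner_of_lt_jdual (hα : 0 ≤ α) (h : (α : EReal) < Jdual J u) :
    ∃ p : H, ∃ j : ℝ, J p = j ∧ α * j < ⟪u, p⟫ := by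
  obtain ⟨⟨p, _, hpJ⟩, hp : (α : EReal) < ⟪u, p⟫ / J p⟩ := lt_iSup_iff.mp h
  have hpTop : J p ≠ ⊤ := by
    rintro hp'
    rw [hp', EReal.div_top] at hp
    exact hp.not_ge (by exact_mod_cast hα)
  obtain ⟨j, hj⟩ := EReal.exists_eq_coe_of_nonneg_of_ne_top hpJ.le hpTop
  rw [hj] at hpJ hp
  have hj0 : 0 < j := by exact_mod_cast hpJ
  rw [← EReal.coe_div, EReal.coe_lt_coe_iff, lt_div_iff₀ hj0] at hp
  exact ⟨p, j, hj, hp⟩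

theorem mul_lt_one_of_lt_jdual (hJ : ∀ w, 0 ≤ J w) (hα : 0 ≤ α)
    (hαlt : (α : EReal) < Jdual J u) {μ : ℝ} (hsub : ∀ w, ((μ * ⟪u, w⟫ : ℝ) : EReal) ≤ J w) :
    α * μ < 1 := by
  obtain ⟨p, j, hJp, hj⟩ := exists_mul_lt_inner_of_lt_jdual hα hαlt
  have hj0 : 0 ≤ j := by exact_mod_cast hJp ▸ hJ p
  have hμp : μ * ⟪u, p⟫ ≤ j := by exact_mod_cast hJp ▸ hsub p
  have hup : 0 < ⟪u, p⟫ := by nlinarith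
  by_contra! h
  nlinarith [mul_le_mul_of_nonneg_left hμp hα]

namespace IsProxPt

theorem inner_sub_le (hconv : ConvexFn J) (hJ : ∀ w, 0 ≤ J w) (hα : 0 ≤ α)
    (hv : IsProxPt J α u v) {w : H} {b r : ℝ} (hJv : J v = b) (hJw : J w = r) :
    ⟪u - v, w - v⟫ ≤ α * (r - b) := by
  have key : ∀ t : ℝ, 0 < t → t ≤ 1 →
      0 ≤ α * (r - b) - ⟪u - v, w - v⟫ + t * (2⁻¹ * ‖w - v‖ ^ 2) := by
    intro t ht0 ht1
    obtain ⟨q, hJz, hq⟩ := hconv.exists_eq_coe_le hJ hJw hJv ht0.le ht1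
    have hmin := hv.objective_le hJv hJz
    have hexp : ‖t • w + (1 - t) • v - u‖ ^ 2
        = ‖v - u‖ ^ 2 + 2 * t * ⟪u - v, v - w⟫ + t ^ 2 * ‖w - v‖ ^ 2 := by
      rw [show t • w + (1 - t) • v - u = (v - u) + t • (w - v) by module, norm_add_sq_real,
        norm_smul, real_inner_smul_right, Real.norm_eq_abs, abs_of_pos ht0,
        ← inner_neg_neg, neg_sub, neg_sub]
      ring
    have hαq : α * q ≤ α * (t * r + (1 - t) * b) := mul_le_mul_of_nonneg_left hq hα
    have hinner : ⟪u - v, v - w⟫ = -⟪u - v, w - v⟫ := by rw [← inner_neg_right, neg_sub]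
    refine nonneg_of_mul_nonneg_right ?_ ht0
    nlinarith
  linarith [nonneg_of_forall_nonneg_add_mul key]

theorem inner_sub_self (hconv : ConvexFn J) (hhom : AbsOneHom J) (hα : 0 ≤ α)
    (hv : IsProxPt J α u v) {b : ℝ} (hJv : J v = b) : ⟪u - v, v⟫ = α * b := by
  have hJ := hconv.nonneg_of_absOneHom hhom
  have h0 := hv.inner_sub_le hconv hJ hα hJv (w := 0) (r := 0) (by rw [hhom.1, EReal.coe_zero])
  have h2 := hv.inner_sub_le hconv hJ hα hJv (w := (2 : ℝ) • v) (r := 2 * b)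
    (by rw [hhom.map_smul_of_nonneg zero_le_two, hJv]; norm_cast)
  rw [zero_sub, inner_neg_right] at h0
  rw [show (2 : ℝ) • v - v = v by module] at h2
  linarith

theorem ne_zero (hconv : ConvexFn J) (hhom : AbsOneHom J) (hα : 0 < α)
    (hαlt : (α : EReal) < Jdual J u) (hv : IsProxPt J α u v) : v ≠ 0 := by
  rintro rfl
  obtain ⟨p, j, hJp, hj⟩ := exists_mul_lt_inner_of_lt_jdual hα.le hαlt
  have h := hv.inner_sub_le hconv (hconv.nonneg_of_absOneHom hhom) hα.le (b := 0)
    (by rw [hhom.1, EReal.coe_zero]) hJp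
  simp only [sub_zero] at h
  linarith

theorem rayleigh_comparison (hhom : AbsOneHom J) (hv : IsProxPt J α u v) (hu0 : u ≠ 0)
    {a b : ℝ} (hJu : J u = a) (hJv : J v = b) :
    α * (b * ‖u‖) + ‖u‖ * (‖u‖ * ‖v‖ - ⟪u, v⟫) ≤ α * (a * ‖v‖) := by
  have hnu : 0 < ‖u‖ := norm_pos_iff.mpr hu0
  set c := ‖v‖ / ‖u‖
  have hcu : c * ‖u‖ = ‖v‖ := div_mul_cancel₀ _ hnu.ne'
  have hJcu : J (c • u) = ((c * a : ℝ) : EReal) := by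
    rw [hhom.map_smul_of_nonneg (by positivity), hJu]
    norm_cast
  have hdist : ‖c • u - u‖ ^ 2 = (‖v‖ - ‖u‖) ^ 2 := by
    rw [show c • u - u = (c - 1) • u by module, norm_smul, mul_pow, Real.norm_eq_abs, sq_abs,
      ← hcu]
    ring
  have hmin := hv.objective_le hJv hJcu
  rw [hdist, norm_sub_sq_real, real_inner_comm] at hmin
  calc α * (b * ‖u‖) + ‖u‖ * (‖u‖ * ‖v‖ - ⟪u, v⟫)
      = ‖u‖ * (α * b + (‖u‖ * ‖v‖ - ⟪u, v⟫)) := by ring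
    _ ≤ ‖u‖ * (α * (c * a)) := mul_le_mul_of_nonneg_left (by linarith) hnu.le
    _ = α * (a * ‖v‖) := by rw [← hcu]; ring

theorem mul_norm_le (hhom : AbsOneHom J) (hα : 0 < α) (hv : IsProxPt J α u v) (hu0 : u ≠ 0)
    {a b : ℝ} (hJu : J u = a) (hJv : J v = b) : b * ‖u‖ ≤ a * ‖v‖ := by
  have hgap : 0 ≤ ‖u‖ * (‖u‖ * ‖v‖ - ⟪u, v⟫) :=
    mul_nonneg (norm_nonneg u) (sub_nonneg.mpr (real_inner_le_norm u v))
  have h := hv.rayleigh_comparison hhom hu0 hJu hJv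
  exact le_of_mul_le_mul_left (by linarith) hα

theorem eq_smul_of_mul_norm_eq (hhom : AbsOneHom J) (hv : IsProxPt J α u v) (hu0 : u ≠ 0)
    {a b : ℝ} (hJu : J u = a) (hJv : J v = b) (heq : b * ‖u‖ = a * ‖v‖) :
    v = (‖v‖ / ‖u‖) • u := by
  have hnu : 0 < ‖u‖ := norm_pos_iff.mpr hu0
  have hcs : ⟪u, v⟫ = ‖u‖ * ‖v‖ := by
    have h := hv.rayleigh_comparison hhom hu0 hJu hJv
    rw [heq, add_le_iff_nonpos_right] at h
    have := nonpos_of_mul_nonpos_right h hnu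
    linarith [real_inner_le_norm u v]
  calc v = ‖u‖⁻¹ • (‖u‖ • v) := by rw [smul_smul, inv_mul_cancel₀ hnu.ne', one_smul]
    _ = (‖v‖ / ‖u‖) • u := by
      rw [← inner_eq_norm_mul_iff_real.mp hcs, smul_smul, inv_mul_eq_div]

theorem inSubdiff_of_mul_norm_eq (hconv : ConvexFn J) (hhom : AbsOneHom J) (hα : 0 < α)
    (hv : IsProxPt J α u v) (hu0 : u ≠ 0) (hv0 : v ≠ 0) {a b : ℝ} (hJu : J u = a)
    (hJv : J v = b) (heq : b * ‖u‖ = a * ‖v‖) : InSubdiff J u ((a / ‖u‖ ^ 2) • u) := by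
  have hnu : 0 < ‖u‖ := norm_pos_iff.mpr hu0
  have hvc := hv.eq_smul_of_mul_norm_eq hhom hu0 hJu hJv heq
  set c := ‖v‖ / ‖u‖
  have hc0 : c ≠ 0 := div_ne_zero (norm_ne_zero_iff.mpr hv0) hnu.ne'
  have hb : b = c * a := by
    rw [eq_comm, div_mul_eq_mul_div, div_eq_iff hnu.ne']
    linarith
  have hshrink : (1 - c) * ‖u‖ ^ 2 = α * a := by
    have h := hv.inner_sub_self hconv hhom hα.le hJv
    rw [hvc, show u - c • u = (1 - c) • u by module, real_inner_smul_left, real_inner_smul_right,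
      real_inner_self_eq_norm_sq, hb] at h
    exact mul_left_cancel₀ hc0 (by linear_combination h)
  have hcoef : a / ‖u‖ ^ 2 = (1 - c) / α := by
    rw [div_eq_div_iff (by positivity) hα.ne']
    linarith
  rw [inSubdiff_div_norm_sq_smul_iff hu0 hJu]
  intro w
  rcases eq_or_ne (J w) ⊤ with hw | hw
  · simp [hw]
  obtain ⟨r, hJw⟩ := EReal.exists_eq_coe_of_nonneg_of_ne_top (hconv.nonneg_of_absOneHom hhom w) hw
  have h := hv.inner_sub_le hconv (hconv.nonneg_of_absOneHom hhom) hα.le hJv hJw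
  rw [hvc, show u - c • u = (1 - c) • u by module, real_inner_smul_left, inner_sub_right,
    real_inner_smul_right, real_inner_self_eq_norm_sq, hb] at h
  rw [hJw, EReal.coe_le_coe_iff, hcoef, div_mul_eq_mul_div, div_le_iff₀ hα]
  linear_combination h + c * hshrink

theorem eq_smul_of_forall_le (hconv : ConvexFn J) (hhom : AbsOneHom J) (hα : 0 ≤ α)
    (hv : IsProxPt J α u v) {μ b : ℝ} (hJv : J v = b) (hJu : J u = ((μ * ‖u‖ ^ 2 : ℝ) : EReal))
    (hsub : ∀ w, ((μ * ⟪u, w⟫ : ℝ) : EReal) ≤ J w) (hμ : α * μ ≤ 1) :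
    v = (1 - α * μ) • u := by
  have hJq : J ((1 - α * μ) • u) = (((1 - α * μ) * (μ * ‖u‖ ^ 2) : ℝ) : EReal) := by
    rw [hhom.map_smul_of_nonneg (by linarith), hJu]
    norm_cast
  have hvar := hv.inner_sub_le hconv (hconv.nonneg_of_absOneHom hhom) hα hJv hJq
  have hsubv : α * (μ * ⟪u, v⟫) ≤ α * b :=
    mul_le_mul_of_nonneg_left (by exact_mod_cast hJv ▸ hsub v) hα
  have hexp : ⟪u - v, (1 - α * μ) • u - v⟫ = α * μ * (1 - α * μ) * ‖u‖ ^ 2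
      - α * μ * ⟪u, v⟫ + ‖(1 - α * μ) • u - v‖ ^ 2 := by
    rw [show u - v = (α * μ) • u + ((1 - α * μ) • u - v) by module, inner_add_left,
      real_inner_self_eq_norm_sq, real_inner_smul_left, inner_sub_right, real_inner_smul_right,
      real_inner_self_eq_norm_sq]
    ring
  have hdist : ‖(1 - α * μ) • u - v‖ ^ 2 ≤ 0 := by
    rw [hexp] at hvar
    linarith
  have := (pow_eq_zero_iff two_ne_zero).mp (le_antisymm hdist (sq_nonneg _))
  exact (sub_eq_zero.mp (norm_eq_zero.mp this)).symm

theorem mul_norm_eq_of_inSubdiff (hconv : ConvexFn J) (hhom : AbsOneHom J) (hα : 0 < α)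
    (hαlt : (α : EReal) < Jdual J u) (hv : IsProxPt J α u v) (hu0 : u ≠ 0) {a b : ℝ}
    (hJu : J u = a) (hJv : J v = b) (hsub : InSubdiff J u ((a / ‖u‖ ^ 2) • u)) :
    b * ‖u‖ = a * ‖v‖ := by
  rw [inSubdiff_div_norm_sq_smul_iff hu0 hJu] at hsub
  have hJ := hconv.nonneg_of_absOneHom hhom
  have hβ := mul_lt_one_of_lt_jdual hJ hα.le hαlt hsub
  have hJu' : J u = ((a / ‖u‖ ^ 2 * ‖u‖ ^ 2 : ℝ) : EReal) := by
    rw [div_mul_cancel₀ _ (by simpa using hu0), hJu]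
  have hvu := hv.eq_smul_of_forall_le hconv hhom hα.le hJv hJu' hsub hβ.le
  have hb : b = (1 - α * (a / ‖u‖ ^ 2)) * a := by
    have h := hJv.symm.trans (congrArg J hvu)
    rw [hhom.map_smul_of_nonneg (by linarith), hJu] at h
    exact_mod_cast h
  rw [hvu, norm_smul, Real.norm_eq_abs, abs_of_pos (by linarith), hb]
  ring

end IsProxPt

end

variable {H : Type*} [NormedAddCommGroup H] [InnerProductSpace ℝ H] [CompleteSpace H]

theorem rayleigh_decrease_of_prox_general
    (J : H → EReal) (hconv : ConvexFn J) (hhom : AbsOneHom J)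
    (u : H) (hu0 : u ≠ 0)
    (α : ℝ) (hα : 0 < α) (hαlt : (α : EReal) < Jdual J u)
    (v : H) (hv : IsProxPt J α u v) :
    v ≠ 0 ∧
    J v / ((‖v‖ : ℝ) : EReal) ≤ J u / ((‖u‖ : ℝ) : EReal) ∧
    (J v / ((‖v‖ : ℝ) : EReal) = J u / ((‖u‖ : ℝ) : EReal) ↔
      InSubdiff J u (((J u).toReal / ‖u‖ ^ 2) • u)) := by
  have hJ := hconv.nonneg_of_absOneHom hhom
  have hv0 := hv.ne_zero hconv hhom hα hαlt
  have hnu : 0 < ‖u‖ := norm_pos_iff.mpr hu0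
  have hnv : 0 < ‖v‖ := norm_pos_iff.mpr hv0
  obtain ⟨b, hJv⟩ := EReal.exists_eq_coe_of_nonneg_of_ne_top (hJ v) (hv.apply_ne_top hhom.1 hα)
  refine ⟨hv0, ?_⟩
  rcases eq_or_ne (J u) ⊤ with hJu | hJu
  · rw [hJu, EReal.top_div_of_pos_ne_top (by exact_mod_cast hnu) (EReal.coe_ne_top _), hJv,
      ← EReal.coe_div]
    exact ⟨le_top, iff_of_false (EReal.coe_ne_top _) (not_inSubdiff_of_eq_top hhom.1 hJu _)⟩
  obtain ⟨a, hJu⟩ := EReal.exists_eq_coe_of_nonneg_of_ne_top (hJ u) hJu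
  rw [hJv, hJu, ← EReal.coe_div, ← EReal.coe_div, EReal.coe_le_coe_iff, EReal.coe_eq_coe_iff,
    div_le_div_iff₀ hnv hnu, div_eq_div_iff hnv.ne' hnu.ne', EReal.toReal_coe]
  exact ⟨hv.mul_norm_le hhom hα hu0 hJu hJv,
    ⟨hv.inSubdiff_of_mul_norm_eq hconv hhom hα hu0 hv0 hJu hJv,
      hv.mul_norm_eq_of_inSubdiff hconv hhom hα hαlt hu0 hJu hJv⟩⟩

/-- **Decrease of the Rayleigh quotient under the proximal operator.**
Let `J` be proper, convex, lsc, absolutely one-homogeneous, `u ∈ N(J)^⊥ \ {0}`,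
`0 < α < J_*(u)`, and let `v = prox_α^J(u)`. Then `v ≠ 0` and
`J(v)/‖v‖ ≤ J(u)/‖u‖`, with equality iff `λ • u ∈ ∂J(u)` for `λ = J(u)/‖u‖²`. -/
theorem rayleigh_decrease_of_prox
    (J : H → EReal) (hproper : ProperFn J) (hconv : ConvexFn J)
    (hlsc : LowerSemicontinuous J) (hhom : AbsOneHom J)
    (u : H) (hu : InNullPerp J u) (hu0 : u ≠ 0)
    (α : ℝ) (hα : 0 < α) (hαlt : (α : EReal) < Jdual J u)
    (v : H) (hv : IsProxPt J α u v) :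
    v ≠ 0 ∧
    J v / ((‖v‖ : ℝ) : EReal) ≤ J u / ((‖u‖ : ℝ) : EReal) ∧
    (J v / ((‖v‖ : ℝ) : EReal) = J u / ((‖u‖ : ℝ) : EReal) ↔
      InSubdiff J u (((J u).toReal / ‖u‖ ^ 2) • u)) :=
  rayleigh_decrease_of_prox_general J hconv hhom u hu0 α hα hαlt v hv
end

section
/- Let H be a real Hilbert space and J : H → ℝ ∪ {+∞} be a proper, convex, lower semi-continuous, absolutely one-homogeneous functional such that for every t ∈ ℝ the sublevel set {u ∈ H : ‖u‖ + J(u) ≤ t} is compact. Let (u^k) ⊂ N(J)^⊥ be a sequence converging (in norm) to u* ∈ H, let α_k > 0 with α_k → α* > 0, and set v^k = prox_{α_k}^J(u^k). Then (v^k) converges in norm to some v* ∈ H, and v* = prox_{α*}^J(u*). -/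
open scoped RealInnerProductSpace

noncomputable section

variable {H : Type*} [NormedAddCommGroup H] [InnerProductSpace ℝ H] [CompleteSpace H]

/-!
By one-homogeneity, `prox_α^J(u) = α • prox_1^J(α⁻¹ • u)` (at the level of the optimality
condition `α⁻¹ • (u - v) ∈ ∂J(v)`, since `∂J(c • x) = ∂J(x)` for `c > 0`). So
`v^k = α_k • x^k` with `x^k = prox_1^J(y^k)`, `y^k = α_k⁻¹ • u^k → α*⁻¹ • u*`. Monotonicity of
`∂J` makes `prox_1^J` nonexpansive, so `(x^k)` is Cauchy; its limit `x*` satisfies the optimality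
condition for `y*` because the graph of `∂J` is closed when `J` is lower semicontinuous. Scaling
back, `v* = α* • x*` is `prox_{α*}^J(u*)`.
-/

open Filter Topology

lemma ProperFn.exists_eq_coe {X : Type*} {J : X → EReal} (hJ : ProperFn J) {x : X}
    (hx : J x ≠ ⊤) : ∃ a : ℝ, J x = a :=
  ⟨(J x).toReal, (EReal.coe_toReal hx (hJ.1 x)).symm⟩

lemma CauchySeq.of_dist_le {X Y ι : Type*} [PseudoMetricSpace X] [PseudoMetricSpace Y]
    [Nonempty ι] [SemilatticeSup ι] {x : ι → X} {y : ι → Y} (hy : CauchySeq y)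
    (h : ∀ m n, dist (x m) (x n) ≤ dist (y m) (y n)) : CauchySeq x := by
  rw [Metric.cauchySeq_iff] at hy ⊢
  intro ε hε
  obtain ⟨N, hN⟩ := hy ε hε
  exact ⟨N, fun m hm n hn => (h m n).trans_lt (hN m hm n hn)⟩

section Subdifferential

variable {E : Type*} [NormedAddCommGroup E] {J : E → EReal}

lemma proxObj_of_eq_coe {α r : ℝ} {u w : E} (h : J w = r) :
    ProxObj J α u w = ((2⁻¹ * ‖w - u‖ ^ 2 + α * r : ℝ) : EReal) := by
  rw [ProxObj, h]; norm_cast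

lemma proxObj_of_eq_top {α : ℝ} (hα : 0 < α) {u w : E} (h : J w = ⊤) : ProxObj J α u w = ⊤ := by
  rw [ProxObj, h, EReal.coe_mul_top_of_pos hα, EReal.add_top_of_ne_bot (EReal.coe_ne_bot _)]

variable [InnerProductSpace ℝ E]

lemma InSubdiff.exists_eq_coe (hJ : ProperFn J) {x p : E} (h : InSubdiff J x p) :
    ∃ a : ℝ, J x = a := by
  refine hJ.exists_eq_coe fun hx => ?_
  obtain ⟨u, hu⟩ := hJ.2
  have := h u
  rw [hx, EReal.top_add_coe] at this
  exact hu (top_le_iff.mp this)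

lemma InSubdiff.inner_sub_nonneg (hJ : ProperFn J) {x y p q : E} (hx : InSubdiff J x p)
    (hy : InSubdiff J y q) : 0 ≤ ⟪p - q, x - y⟫ := by
  obtain ⟨a, ha⟩ := hx.exists_eq_coe hJ
  obtain ⟨b, hb⟩ := hy.exists_eq_coe hJ
  have hxy : a + ⟪p, y - x⟫ ≤ b := by have := hx y; rw [ha, hb] at this; exact_mod_cast this
  have hyx : b + ⟪q, x - y⟫ ≤ a := by have := hy x; rw [ha, hb] at this; exact_mod_cast this
  have : ⟪p - q, x - y⟫ = -(⟪p, y - x⟫ + ⟪q, x - y⟫) := by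
    simp only [inner_sub_left, inner_sub_right]; ring
  linarith

/-- `x = prox_1^J(y)` is characterised by `y - x ∈ ∂J(x)`, so this is the nonexpansiveness
of `prox_1^J`. -/
lemma InSubdiff.norm_sub_le (hJ : ProperFn J) {x y x' y' : E} (h : InSubdiff J x (y - x))
    (h' : InSubdiff J x' (y' - x')) : ‖x - x'‖ ≤ ‖y - y'‖ := by
  have hmono := h.inner_sub_nonneg hJ h'
  rw [show y - x - (y' - x') = (y - y') - (x - x') by abel, inner_sub_left,
    real_inner_self_eq_norm_sq] at hmono
  have : ‖x - x'‖ ^ 2 ≤ ‖y - y'‖ * ‖x - x'‖ := by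
    linarith [real_inner_le_norm (y - y') (x - x')]
  nlinarith [norm_nonneg (x - x'), norm_nonneg (y - y')]

lemma InSubdiff.smul (hJ : ProperFn J) (hhom : AbsOneHom J) {x p : E} (h : InSubdiff J x p)
    {c : ℝ} (hc : 0 < c) : InSubdiff J (c • x) p := by
  have hscale : ∀ z, J (c • z) = c * J z := fun z => by rw [hhom.2 c hc.ne', abs_of_pos hc]
  intro w
  have hw : J w = c * J (c⁻¹ • w) := by rw [← hscale, smul_inv_smul₀ hc.ne']
  rcases eq_or_ne (J (c⁻¹ • w)) ⊤ with htop | hfin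
  · rw [hw, htop, EReal.coe_mul_top_of_pos hc]; exact le_top
  obtain ⟨r, hr⟩ := hJ.exists_eq_coe hfin
  obtain ⟨a, ha⟩ := h.exists_eq_coe hJ
  have hsub : a + ⟪p, c⁻¹ • w - x⟫ ≤ r := by
    have := h (c⁻¹ • w); rw [ha, hr] at this; exact_mod_cast this
  have hinner : ⟪p, w - c • x⟫ = c * ⟪p, c⁻¹ • w - x⟫ := by
    rw [← real_inner_smul_right, smul_sub, smul_inv_smul₀ hc.ne']
  rw [hscale, hw, ha, hr, hinner]
  exact_mod_cast (by nlinarith : c * a + c * ⟪p, c⁻¹ • w - x⟫ ≤ c * r)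

lemma InSubdiff.of_tendsto {ι : Type*} {l : Filter ι} [l.NeBot] (hJ : ProperFn J)
    (hlsc : LowerSemicontinuous J) {x p : ι → E} {x₀ p₀ : E} (hx : Tendsto x l (𝓝 x₀))
    (hp : Tendsto p l (𝓝 p₀)) (h : ∀ k, InSubdiff J (x k) (p k)) : InSubdiff J x₀ p₀ := by
  intro w
  rcases eq_or_ne (J w) ⊤ with htop | hfin
  · rw [htop]; exact le_top
  obtain ⟨c, hc⟩ := hJ.exists_eq_coe hfin
  have hle : ∀ k, J (x k) ≤ ((c - ⟪p k, w - x k⟫ : ℝ) : EReal) := fun k => by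
    rw [EReal.coe_sub, EReal.le_sub_iff_add_le (by simp) (by simp), ← hc]; exact h k w
  have hlim : Tendsto (fun k => ((c - ⟪p k, w - x k⟫ : ℝ) : EReal)) l
      (𝓝 ((c - ⟪p₀, w - x₀⟫ : ℝ) : EReal)) :=
    (continuous_coe_real_ereal.tendsto _).comp
      (tendsto_const_nhds.sub (hp.inner (tendsto_const_nhds.sub hx)))
  have hx₀ := hlsc.isClosed_epigraph.mem_of_tendsto (hx.prodMk_nhds hlim) (.of_forall hle)
  rwa [Set.mem_ofPred_eq, EReal.coe_sub, EReal.le_sub_iff_add_le (by simp) (by simp), ← hc] at hx₀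

lemma IsProxPt.inSubdiff (hJ : ProperFn J) (hconv : ConvexFn J) {α : ℝ} (hα : 0 < α) {u v : E}
    (h : IsProxPt J α u v) : InSubdiff J v (α⁻¹ • (u - v)) := by
  intro w
  rcases eq_or_ne (J w) ⊤ with htop | hfin
  · rw [htop]; exact le_top
  obtain ⟨r, hr⟩ := hJ.exists_eq_coe hfin
  obtain ⟨j, hj⟩ : ∃ j : ℝ, J v = j := hJ.exists_eq_coe fun hv => by
    have := h w
    rw [proxObj_of_eq_top hα hv, proxObj_of_eq_coe hr, top_le_iff] at this
    exact EReal.coe_ne_top _ this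
  -- compare `v` with the points of the segment `[v, w]`, then let them tend to `v`
  have hsegment : ∀ t ∈ Set.Ioc (0 : ℝ) 1,
      α * (j - r) ≤ ⟪v - u, w - v⟫ + t / 2 * ‖w - v‖ ^ 2 := by
    rintro t ⟨ht0, ht1⟩
    have hJz := hconv w v t ht0.le ht1
    rw [hr, hj, ← EReal.coe_mul, ← EReal.coe_mul, ← EReal.coe_add] at hJz
    obtain ⟨m, hm⟩ := hJ.exists_eq_coe (ne_top_of_le_ne_top (EReal.coe_ne_top _) hJz)
    rw [hm, EReal.coe_le_coe_iff] at hJz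
    have hmin := h (t • w + (1 - t) • v)
    rw [proxObj_of_eq_coe hj, proxObj_of_eq_coe hm, EReal.coe_le_coe_iff,
      show t • w + (1 - t) • v - u = (v - u) + t • (w - v) by module, norm_add_sq_real,
      real_inner_smul_right, norm_smul, Real.norm_eq_abs, mul_pow, sq_abs] at hmin
    have : t * (α * (j - r)) ≤ t * (⟪v - u, w - v⟫ + t / 2 * ‖w - v‖ ^ 2) := by
      nlinarith [mul_le_mul_of_nonneg_left hJz hα.le]
    exact le_of_mul_le_mul_left this ht0
  have hlim : Tendsto (fun t : ℝ => ⟪v - u, w - v⟫ + t / 2 * ‖w - v‖ ^ 2) (𝓝[>] 0)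
      (𝓝 ⟪v - u, w - v⟫) := by
    have : Continuous fun t : ℝ => ⟪v - u, w - v⟫ + t / 2 * ‖w - v‖ ^ 2 := by fun_prop
    simpa using (this.tendsto 0).mono_left nhdsWithin_le_nhds
  have hvar : α * (j - r) ≤ ⟪v - u, w - v⟫ :=
    ge_of_tendsto hlim (eventually_of_mem (Ioc_mem_nhdsGT one_pos) hsegment)
  have hinner : ⟪α⁻¹ • (u - v), w - v⟫ = -(α⁻¹ * ⟪v - u, w - v⟫) := by
    rw [real_inner_smul_left, ← neg_sub v u, inner_neg_left, mul_neg]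
  have : j - r ≤ α⁻¹ * ⟪v - u, w - v⟫ := by
    rw [← div_eq_inv_mul, le_div_iff₀' hα]; exact hvar
  rw [hj, hr, hinner]
  exact_mod_cast (by linarith : j + -(α⁻¹ * ⟪v - u, w - v⟫) ≤ r)

lemma InSubdiff.isProxPt (hJ : ProperFn J) {α : ℝ} (hα : 0 < α) {u v : E}
    (h : InSubdiff J v (α⁻¹ • (u - v))) : IsProxPt J α u v := by
  intro w
  rcases eq_or_ne (J w) ⊤ with htop | hfin
  · rw [proxObj_of_eq_top hα htop]; exact le_top
  obtain ⟨r, hr⟩ := hJ.exists_eq_coe hfin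
  obtain ⟨j, hj⟩ := h.exists_eq_coe hJ
  have hsub : α * j + ⟪u - v, w - v⟫ ≤ α * r := by
    have := h w
    rw [hj, hr, real_inner_smul_left, ← EReal.coe_add, EReal.coe_le_coe_iff] at this
    have := mul_le_mul_of_nonneg_left this hα.le
    rwa [mul_add, mul_inv_cancel_left₀ hα.ne'] at this
  have hnorm : ‖w - u‖ ^ 2 = ‖w - v‖ ^ 2 - 2 * ⟪u - v, w - v⟫ + ‖v - u‖ ^ 2 := by
    rw [real_inner_comm, norm_sub_rev v u, ← norm_sub_sq_real, sub_sub_sub_cancel_right]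
  rw [proxObj_of_eq_coe hj, proxObj_of_eq_coe hr, EReal.coe_le_coe_iff, hnorm]
  nlinarith [sq_nonneg ‖w - v‖]

end Subdifferential

theorem prox_continuity_general
    (J : H → EReal) (hproper : ProperFn J) (hconv : ConvexFn J)
    (hlsc : LowerSemicontinuous J) (hhom : AbsOneHom J)
    (useq : ℕ → H)
    (ustar : H) (hconv_u : Filter.Tendsto useq Filter.atTop (nhds ustar))
    (αseq : ℕ → ℝ) (hαpos : ∀ k, 0 < αseq k)
    (αstar : ℝ) (hαstar : 0 < αstar)
    (hconv_α : Filter.Tendsto αseq Filter.atTop (nhds αstar))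
    (vseq : ℕ → H) (hv : ∀ k, IsProxPt J (αseq k) (useq k) (vseq k)) :
    ∃ vstar : H, Filter.Tendsto vseq Filter.atTop (nhds vstar) ∧
      IsProxPt J αstar ustar vstar := by
  set x := fun k => (αseq k)⁻¹ • vseq k
  set y := fun k => (αseq k)⁻¹ • useq k
  -- `x k = prox_1^J (y k)`, by one-homogeneity
  have hsub : ∀ k, InSubdiff J (x k) (y k - x k) := fun k => by
    have := ((hv k).inSubdiff hproper hconv (hαpos k)).smul hproper hhom (inv_pos.2 (hαpos k))
    rwa [smul_sub] at this
  have hy : Tendsto y atTop (𝓝 (αstar⁻¹ • ustar)) := (hconv_α.inv₀ hαstar.ne').smul hconv_u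
  have hcauchy : CauchySeq x := hy.cauchySeq.of_dist_le fun m n => by
    simpa only [dist_eq_norm] using (hsub m).norm_sub_le hproper (hsub n)
  obtain ⟨xstar, hx⟩ := cauchySeq_tendsto_of_complete hcauchy
  have hxstar : InSubdiff J xstar (αstar⁻¹ • ustar - xstar) :=
    .of_tendsto hproper hlsc hx (hy.sub hx) hsub
  refine ⟨αstar • xstar, ?_, ?_⟩
  · have hvx : vseq = fun k => αseq k • x k :=
      funext fun k => (smul_inv_smul₀ (hαpos k).ne' _).symm
    exact hvx ▸ hconv_α.smul hx
  · refine InSubdiff.isProxPt hproper hαstar ?_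
    rw [smul_sub, inv_smul_smul₀ hαstar.ne']
    exact hxstar.smul hproper hhom hαstar

/-- **Continuity of the proximal operator along convergent sequences.**
Let `J` be proper, convex, lsc, absolutely one-homogeneous, with compact
sublevel sets of `‖·‖ + J(·)`. If `(u^k) ⊆ N(J)^⊥` converges to `u*`,
`α_k > 0` with `α_k → α* > 0`, and `v^k = prox_{α_k}^J(u^k)`, then `(v^k)`
converges in norm to some `v*` and `v* = prox_{α*}^J(u*)`. -/
theorem prox_continuity
    (J : H → EReal) (hproper : ProperFn J) (hconv : ConvexFn J)
    (hlsc : LowerSemicontinuous J) (hhom : AbsOneHom J)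
    (hcompact : ∀ t : ℝ, IsCompact {u : H | ((‖u‖ : ℝ) : EReal) + J u ≤ (t : EReal)})
    (useq : ℕ → H) (hperp : ∀ k, InNullPerp J (useq k))
    (ustar : H) (hconv_u : Filter.Tendsto useq Filter.atTop (nhds ustar))
    (αseq : ℕ → ℝ) (hαpos : ∀ k, 0 < αseq k)
    (αstar : ℝ) (hαstar : 0 < αstar)
    (hconv_α : Filter.Tendsto αseq Filter.atTop (nhds αstar))
    (vseq : ℕ → H) (hv : ∀ k, IsProxPt J (αseq k) (useq k) (vseq k)) :
    ∃ vstar : H, Filter.Tendsto vseq Filter.atTop (nhds vstar) ∧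
      IsProxPt J αstar ustar vstar :=
  prox_continuity_general J hproper hconv hlsc hhom useq ustar hconv_u αseq hαpos αstar hαstar
    hconv_α vseq hv

end
end

section
/- Let H be a real Hilbert space and J : H → ℝ ∪ {+∞} be a proper, convex, lower semi-continuous, absolutely one-homogeneous functional satisfying: (i) the Poincaré inequality c_P ‖u‖ ≤ J(u) for all u ∈ N(J)^⊥ with some c_P > 0, and (ii) compactness of the sublevel sets {u : ‖u‖ + J(u) ≤ t} for all t. Let f ∈ N(J)^⊥ with ‖f‖ = 1 and 0 < J(f) < ∞, fix c ∈ (0,1), and let (u^k) be generated by the proximal power method u⁰ = f, v^k = prox_{α(u^k)}^J(u^k), u^{k+1} = v^k/‖v^k‖, where α is either the constant parameter rule α(u) = c/J(u⁰) or the variable parameter rule α(u) = c/J(u). Then a subsequence of (u^k) converges in norm to some u* ∈ H with ‖u*‖ = 1 (in particular u* ≠ 0) which is an eigenvector of the proximal operator: there exists λ with 0 < λ < 1 such that λ u* = prox_{α(u*)}^J(u*). -/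
/-!
Write `μₖ = J(uₖ)` and `αₖ = α(uₖ)`. Testing the prox inequality along the rays through `vₖ`
and through `uₖ` gives `⟪uₖ, vₖ⟫ = ‖vₖ‖² + αₖ J(vₖ)` and `1 - αₖμₖ ≤ ‖vₖ‖ ≤ 1 - αₖμₖ₊₁`, so
`μₖ` decreases; translations along `N(J)` keep every iterate in `N(J)^⊥`, where the Poincaré
inequality bounds `μₖ` below by `c_P`. Hence `μₖ → μ* > 0`, `αₖ → α*` and
`‖vₖ‖ → λ = 1 - α*μ* ∈ (0, 1)`. The iterates lie in a compact sublevel set of `‖·‖ + J`; at a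
limit point `u*` lower semicontinuity gives `J(u*) ≤ μ*`, and passing to the limit in the prox
values `½(1 - ‖vₖ‖²)` shows `λu* = prox_{α*}(u*)`. The optimality identity for `λu*` then forces
`J(u*) = μ*`, so that `α(u*) = α*` under either parameter rule.
-/

open scoped RealInnerProductSpace

open Filter Topology

theorem LowerSemicontinuous.le_of_tendsto {α γ ι : Type*} [TopologicalSpace α] [LinearOrder γ]
    [TopologicalSpace γ] [OrderClosedTopology γ] [DenselyOrdered γ] {f : α → γ}
    (hf : LowerSemicontinuous f) {l : Filter ι} [l.NeBot] {x : ι → α} {x₀ : α} {y₀ : γ}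
    (hx : Tendsto x l (𝓝 x₀)) (hfx : Tendsto (f ∘ x) l (𝓝 y₀)) : f x₀ ≤ y₀ :=
  le_of_forall_lt_imp_le_of_dense fun _ hy =>
    ge_of_tendsto hfx ((hx.eventually (hf x₀ _ hy)).mono fun _ h => h.le)

theorem eq_zero_of_forall_quadratic_nonneg {a b : ℝ}
    (h : ∀ x : ℝ, -1 ≤ x → 0 ≤ a * x ^ 2 + b * x) : b = 0 := by
  set K := |a| + |b| + 1
  have hK : 0 < K := by positivity
  have hx : -1 ≤ -b / K := by
    rw [neg_div, neg_le_neg_iff, div_le_one hK]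
    linarith [le_abs_self b, abs_nonneg a]
  have hval : a * (-b / K) ^ 2 + b * (-b / K) = b ^ 2 * (a - K) / K ^ 2 := by
    field_simp
    ring
  have hnonneg : 0 ≤ b ^ 2 * (a - K) := by
    have := h _ hx
    rwa [hval, le_div_iff₀ (by positivity), zero_mul] at this
  have hb : b ^ 2 ≤ 0 := by nlinarith [le_abs_self a, abs_nonneg b, sq_nonneg b]
  exact pow_eq_zero_iff two_ne_zero |>.1 (le_antisymm hb (sq_nonneg b))

section

variable {H : Type*} [NormedAddCommGroup H] [InnerProductSpace ℝ H]

theorem norm_smul_sub_self_of_norm_eq_one {x : H} (hx : ‖x‖ = 1) (t : ℝ) :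
    ‖t • x - x‖ = |t - 1| := by
  rw [show t • x - x = (t - 1) • x by rw [sub_smul, one_smul], norm_smul, hx, mul_one,
    Real.norm_eq_abs]

theorem InNullPerp.smul {J : H → EReal} {u : H} (h : InNullPerp J u) (t : ℝ) :
    InNullPerp J (t • u) := fun n hn => by
  rw [real_inner_smul_left, h n hn, mul_zero]

namespace AbsOneHom

variable {J : H → EReal}

theorem map_smul_of_nonneg_s13 (hhom : AbsOneHom J) {t r : ℝ} (ht : 0 ≤ t) {u : H}
    (hu : J u = r) : J (t • u) = ↑(t * r) := by
  rcases ht.eq_or_lt with rfl | ht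
  · simp [hhom.1]
  · rw [hhom.2 t ht.ne' u, hu, abs_of_pos ht, EReal.coe_mul]

theorem map_smul_eq_zero (hhom : AbsOneHom J) {n : H} (hn : J n = 0) (t : ℝ) :
    J (t • n) = 0 := by
  rcases eq_or_ne t 0 with rfl | ht
  · rw [zero_smul, hhom.1]
  · rw [hhom.2 t ht n, hn, mul_zero]

end AbsOneHom

namespace ConvexFn

variable {J : H → EReal}

theorem map_add_le_of_map_eq_zero (hconv : ConvexFn J) (hhom : AbsOneHom J) {n : H}
    (hn : J n = 0) (v : H) : J (v + n) ≤ J v := by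
  have h := hconv ((2 : ℝ) • v) ((2 : ℝ) • n) (1 / 2) (by norm_num) (by norm_num)
  rw [hhom.map_smul_eq_zero hn, mul_zero, add_zero, hhom.2 2 two_ne_zero v, ← mul_assoc,
    ← EReal.coe_mul, smul_smul, smul_smul] at h
  norm_num at h
  exact h

theorem map_add_of_map_eq_zero (hconv : ConvexFn J) (hhom : AbsOneHom J) {n : H}
    (hn : J n = 0) (v : H) : J (v + n) = J v := by
  refine le_antisymm (hconv.map_add_le_of_map_eq_zero hhom hn v) ?_
  simpa using hconv.map_add_le_of_map_eq_zero hhom (hhom.map_smul_eq_zero hn (-1)) (v + n)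

end ConvexFn

end

section

variable {H : Type*} [NormedAddCommGroup H]

namespace IsProxPt

variable {J : H → EReal} {a : ℝ} {u v : H}

theorem le_of_eq_coe (h : IsProxPt J a u v) {jv : ℝ} (hjv : J v = jv) {w : H} {jw : ℝ}
    (hjw : J w = jw) : 2⁻¹ * ‖v - u‖ ^ 2 + a * jv ≤ 2⁻¹ * ‖w - u‖ ^ 2 + a * jw := by
  have h := h w
  rwa [ProxObj, ProxObj, hjv, hjw, ← EReal.coe_mul, ← EReal.coe_mul, ← EReal.coe_add,
    ← EReal.coe_add, EReal.coe_le_coe_iff] at h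

theorem ne_top (h : IsProxPt J a u v) (ha : 0 < a) {r : ℝ} (hu : J u = r) : J v ≠ ⊤ := by
  intro htop
  have h := h u
  rw [ProxObj, ProxObj, htop, hu, EReal.coe_mul_top_of_pos ha,
    EReal.add_top_of_ne_bot (EReal.coe_ne_bot _), ← EReal.coe_mul, ← EReal.coe_add] at h
  exact (EReal.coe_lt_top _).not_ge h

theorem of_tendsto {ι : Type*} {l : Filter ι} [l.NeBot] (hbot : ∀ w, J w ≠ ⊥)
    {as : ι → ℝ} {x y : ι → H} {r : ι → ℝ} {a₀ r₀ : ℝ} {x₀ y₀ : H}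
    (h : ∀ n, IsProxPt J (as n) (x n) (y n)) (hr : ∀ n, ProxObj J (as n) (x n) (y n) = r n)
    (has : Tendsto as l (𝓝 a₀)) (hx : Tendsto x l (𝓝 x₀)) (hr₀ : Tendsto r l (𝓝 r₀))
    (ha₀ : 0 < a₀) (hy₀ : ProxObj J a₀ x₀ y₀ ≤ r₀) : IsProxPt J a₀ x₀ y₀ := by
  intro w
  refine hy₀.trans ?_
  cases hJw : J w with
  | bot => exact absurd hJw (hbot w)
  | top =>
    rw [ProxObj, hJw, EReal.coe_mul_top_of_pos ha₀, EReal.add_top_of_ne_bot (EReal.coe_ne_bot _)]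
    exact le_top
  | coe jw =>
    rw [ProxObj, hJw, ← EReal.coe_mul, ← EReal.coe_add, EReal.coe_le_coe_iff]
    refine le_of_tendsto_of_tendsto' hr₀
      ((((tendsto_const_nhds.sub hx).norm.pow 2).const_mul _).add (has.mul_const jw)) fun n => ?_
    have h := h n w
    rwa [hr n, ProxObj, hJw, ← EReal.coe_mul, ← EReal.coe_add, EReal.coe_le_coe_iff] at h

end IsProxPt

end

section

variable {H : Type*} [NormedAddCommGroup H] [InnerProductSpace ℝ H]

namespace IsProxPt

variable {J : H → EReal} {a : ℝ} {u v : H}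

/-- First-order optimality of `v` along a direction `d` on which `J` is affine. -/
theorem inner_sub_add_mul_eq_zero (h : IsProxPt J a u v) {d : H} {jv b : ℝ}
    (hd : ∀ x : ℝ, -1 ≤ x → J (v + x • d) = ↑(jv + x * b)) : ⟪v - u, d⟫ + a * b = 0 := by
  have hjv : J v = jv := by simpa using hd 0 (by norm_num)
  refine eq_zero_of_forall_quadratic_nonneg (a := 2⁻¹ * ‖d‖ ^ 2) fun x hx => ?_
  have hle := h.le_of_eq_coe hjv (hd x hx)
  rw [show v + x • d - u = (v - u) + x • d by abel, norm_add_sq_real, real_inner_smul_right,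
    norm_smul, mul_pow, Real.norm_eq_abs, sq_abs] at hle
  linarith

theorem inner_eq (h : IsProxPt J a u v) (hhom : AbsOneHom J) {jv : ℝ} (hjv : J v = jv) :
    ⟪u, v⟫ = ‖v‖ ^ 2 + a * jv := by
  have h := h.inner_sub_add_mul_eq_zero (d := v) fun x hx => by
    rw [show v + x • v = (1 + x) • v by rw [add_smul, one_smul],
      hhom.map_smul_of_nonneg_s13 (by linarith) hjv, add_mul, one_mul]
  rw [inner_sub_left, real_inner_self_eq_norm_sq] at h
  linarith

theorem inNullPerp (h : IsProxPt J a u v) (hconv : ConvexFn J) (hhom : AbsOneHom J) {jv : ℝ}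
    (hjv : J v = jv) (hu : InNullPerp J u) : InNullPerp J v := fun n hn => by
  have h := h.inner_sub_add_mul_eq_zero (d := n) (b := 0) fun x _ => by
    rw [hconv.map_add_of_map_eq_zero hhom (hhom.map_smul_eq_zero hn x), hjv, mul_zero, add_zero]
  rwa [mul_zero, add_zero, inner_sub_left, hu n hn, sub_zero] at h

theorem proxObj_eq (h : IsProxPt J a u v) (hhom : AbsOneHom J) {jv : ℝ} (hjv : J v = jv) :
    ProxObj J a u v = (((2 : ℝ)⁻¹ * (‖u‖ ^ 2 - ‖v‖ ^ 2) : ℝ) : EReal) := by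
  rw [ProxObj, hjv, ← EReal.coe_mul, ← EReal.coe_add, norm_sub_sq_real, real_inner_comm,
    h.inner_eq hhom hjv]
  congr 1
  ring

theorem one_sub_le_norm (h : IsProxPt J a u v) (hhom : AbsOneHom J) {jv : ℝ} (hjv : J v = jv)
    (hu : ‖u‖ = 1) {μ : ℝ} (hJu : J u = μ) (haμ : a * μ ≤ 1) : 1 - a * μ ≤ ‖v‖ := by
  have hle := h ((1 - a * μ) • u)
  rw [h.proxObj_eq hhom hjv, ProxObj, hhom.map_smul_of_nonneg_s13 (sub_nonneg.2 haμ) hJu,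
    norm_smul_sub_self_of_norm_eq_one hu, sq_abs, ← EReal.coe_mul, ← EReal.coe_add,
    EReal.coe_le_coe_iff, hu] at hle
  exact (pow_le_pow_iff_left₀ (sub_nonneg.2 haμ) (norm_nonneg v) two_ne_zero).1 (by nlinarith)

theorem norm_sq_add_le_norm (h : IsProxPt J a u v) (hhom : AbsOneHom J) {jv : ℝ}
    (hjv : J v = jv) (hu : ‖u‖ ≤ 1) : ‖v‖ ^ 2 + a * jv ≤ ‖v‖ :=
  h.inner_eq hhom hjv ▸ (real_inner_le_norm u v).trans (mul_le_of_le_one_left (norm_nonneg v) hu)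

theorem eq_one_sub_of_smul_self {lam : ℝ} (h : IsProxPt J a u (lam • u)) (hhom : AbsOneHom J)
    (hu : ‖u‖ = 1) (hlam : 0 < lam) {j : ℝ} (hJu : J u = j) : lam = 1 - a * j := by
  have h := h.inner_eq hhom (hhom.map_smul_of_nonneg_s13 hlam.le hJu)
  rw [real_inner_smul_right, real_inner_self_eq_norm_sq, norm_smul, hu, Real.norm_eq_abs,
    abs_of_pos hlam] at h
  have : lam * 1 = lam * (lam + a * j) := by linarith
  linarith [mul_left_cancel₀ hlam.ne' this]

end IsProxPt

end

section

variable {H : Type*} {J : H → EReal}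

def ParameterRule (J : H → EReal) (f : H) (c : ℝ) (α : H → ℝ) : Prop :=
  (∀ u : H, (α u : EReal) = (c : EReal) / J f) ∨ (∀ u : H, (α u : EReal) = (c : EReal) / J u)

namespace ParameterRule

variable {f : H} {c : ℝ} {α : H → ℝ}

theorem pos_and_mul_le (hrule : ParameterRule J f c α) (hc : 0 < c) {μ₀ μ : ℝ} {u : H}
    (hJf : J f = μ₀) (hJu : J u = μ) (hμ : 0 < μ) (hμμ₀ : μ ≤ μ₀) :
    0 < α u ∧ α u * μ ≤ c := by
  rcases hrule with h | h
  · have hα : α u = c / μ₀ := by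
      have h := h u
      rw [hJf, ← EReal.coe_div] at h
      exact_mod_cast h
    have hμ₀ : 0 < μ₀ := hμ.trans_le hμμ₀
    rw [hα, div_mul_eq_mul_div, div_le_iff₀ hμ₀]
    exact ⟨by positivity, by nlinarith⟩
  · have hα : α u = c / μ := by
      have h := h u
      rw [hJu, ← EReal.coe_div] at h
      exact_mod_cast h
    rw [hα, div_mul_cancel₀ _ hμ.ne']
    exact ⟨by positivity, le_rfl⟩

theorem exists_tendsto (hrule : ParameterRule J f c α) (hc : 0 < c) {u : ℕ → H} {μ : ℕ → ℝ}
    {μ₀ μs : ℝ} (hJf : J f = μ₀) (hJu : ∀ k, J (u k) = μ k) (hμ : Tendsto μ atTop (𝓝 μs))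
    (hμs : 0 < μs) (hμsμ₀ : μs ≤ μ₀) :
    ∃ αs, Tendsto (fun k => α (u k)) atTop (𝓝 αs) ∧ 0 < αs ∧ αs * μs ≤ c ∧
      ∀ w, J w = μs → α w = αs := by
  rcases hrule with h | h
  · have hα : ∀ w, α w = c / μ₀ := fun w => by
      have h := h w
      rw [hJf, ← EReal.coe_div] at h
      exact_mod_cast h
    have hμ₀ : 0 < μ₀ := hμs.trans_le hμsμ₀
    refine ⟨c / μ₀, by simp only [hα]; exact tendsto_const_nhds, by positivity, ?_,
      fun w _ => hα w⟩
    rw [div_mul_eq_mul_div, div_le_iff₀ hμ₀]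
    nlinarith
  · have hα : ∀ w (r : ℝ), J w = r → α w = c / r := fun w r hr => by
      have h := h w
      rw [hr, ← EReal.coe_div] at h
      exact_mod_cast h
    refine ⟨c / μs, ?_, by positivity, (div_mul_cancel₀ _ hμs.ne').le, fun w hw => hα w μs hw⟩
    simp only [fun k => hα (u k) (μ k) (hJu k)]
    exact tendsto_const_nhds.div hμ hμs.ne'

end ParameterRule

end

section

variable {H : Type*} [NormedAddCommGroup H] [InnerProductSpace ℝ H] {J : H → EReal}

theorem proxPowerMethod_step (hbot : ∀ w, J w ≠ ⊥) (hconv : ConvexFn J) (hhom : AbsOneHom J)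
    {a μ : ℝ} {u v : H} (hv : IsProxPt J a u v) (hu : ‖u‖ = 1) (hperp : InNullPerp J u)
    (hJu : J u = μ) (ha : 0 < a) (haμ : a * μ < 1) :
    ∃ μ' : ℝ, J (‖v‖⁻¹ • v) = μ' ∧ InNullPerp J (‖v‖⁻¹ • v) ∧ ‖‖v‖⁻¹ • v‖ = 1 ∧
      1 - a * μ ≤ ‖v‖ ∧ ‖v‖ + a * μ' ≤ 1 ∧
      ProxObj J a u v = (((2 : ℝ)⁻¹ * (1 - ‖v‖ ^ 2) : ℝ) : EReal) := by
  obtain ⟨jv, hjv⟩ : ∃ jv : ℝ, J v = jv :=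
    ⟨_, (EReal.coe_toReal (hv.ne_top ha hJu) (hbot v)).symm⟩
  have hlow := hv.one_sub_le_norm hhom hjv hu hJu haμ.le
  have hvpos : 0 < ‖v‖ := by linarith
  have hup := hv.norm_sq_add_le_norm hhom hjv hu.le
  refine ⟨‖v‖⁻¹ * jv, hhom.map_smul_of_nonneg_s13 (inv_nonneg.2 hvpos.le) hjv,
    (hv.inNullPerp hconv hhom hjv hperp).smul _, norm_smul_inv_norm (norm_pos_iff.1 hvpos), hlow,
    ?_, by rw [hv.proxObj_eq hhom hjv, hu, one_pow]⟩
  rw [← mul_le_mul_iff_right₀ hvpos]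
  field_simp
  nlinarith

theorem proxPowerMethod_iterates (hbot : ∀ w, J w ≠ ⊥) (hconv : ConvexFn J) (hhom : AbsOneHom J)
    {cP : ℝ} (hcP : 0 < cP) (hpoincare : ∀ u : H, InNullPerp J u → ((cP * ‖u‖ : ℝ) : EReal) ≤ J u)
    {f : H} (hf : InNullPerp J f) (hfnorm : ‖f‖ = 1) (hJf : J f ≠ ⊤)
    {c : ℝ} (hc0 : 0 < c) (hc1 : c < 1) {α : H → ℝ} (hrule : ParameterRule J f c α)
    {u v : ℕ → H} (hinit : u 0 = f) (hv : ∀ k, IsProxPt J (α (u k)) (u k) (v k))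
    (hstep : ∀ k, u (k + 1) = ‖v k‖⁻¹ • v k) :
    ∃ μ : ℕ → ℝ, ∀ k, ‖u k‖ = 1 ∧ J (u k) = μ k ∧ cP ≤ μ k ∧ μ (k + 1) ≤ μ k ∧
      1 - α (u k) * μ k ≤ ‖v k‖ ∧ ‖v k‖ + α (u k) * μ (k + 1) ≤ 1 ∧
      ProxObj J (α (u k)) (u k) (v k) = (((2 : ℝ)⁻¹ * (1 - ‖v k‖ ^ 2) : ℝ) : EReal) := by
  set μ : ℕ → ℝ := fun k => (J (u k)).toReal
  have hcP_le {w : H} {r : ℝ} (hw : InNullPerp J w) (hnorm : ‖w‖ = 1) (hJw : J w = r) : cP ≤ r := by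
    have h := hpoincare w hw
    rwa [hnorm, mul_one, hJw, EReal.coe_le_coe_iff] at h
  have hJf₀ : J f = μ 0 := by simp only [μ, hinit, EReal.coe_toReal hJf (hbot f)]
  let Invariant (k : ℕ) : Prop :=
    ‖u k‖ = 1 ∧ InNullPerp J (u k) ∧ J (u k) = μ k ∧ cP ≤ μ k ∧ μ k ≤ μ 0
  have hnext : ∀ k, Invariant k → Invariant (k + 1) ∧ μ (k + 1) ≤ μ k ∧
      1 - α (u k) * μ k ≤ ‖v k‖ ∧ ‖v k‖ + α (u k) * μ (k + 1) ≤ 1 ∧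
      ProxObj J (α (u k)) (u k) (v k) = (((2 : ℝ)⁻¹ * (1 - ‖v k‖ ^ 2) : ℝ) : EReal) := by
    rintro k ⟨hu, hperp, hJu, hcPk, hk0⟩
    obtain ⟨ha, haμ⟩ := hrule.pos_and_mul_le hc0 hJf₀ hJu (hcP.trans_le hcPk) hk0
    obtain ⟨μ', hJ', hperp', hnorm', hlow, hup, hval⟩ :=
      proxPowerMethod_step hbot hconv hhom (hv k) hu hperp hJu ha (by linarith)
    rw [← hstep k] at hJ' hperp' hnorm'
    have hμ' : μ (k + 1) = μ' := by simp only [μ, hJ', EReal.toReal_coe]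
    rw [← hμ'] at hJ' hup
    have hmono : μ (k + 1) ≤ μ k := le_of_mul_le_mul_left (by linarith) ha
    exact ⟨⟨hnorm', hperp', hJ', hcP_le hperp' hnorm' hJ', hmono.trans hk0⟩, hmono, hlow, hup, hval⟩
  have hinv : ∀ k, Invariant k := by
    intro k
    induction k with
    | zero => exact ⟨hinit ▸ hfnorm, hinit ▸ hf, hinit ▸ hJf₀, hcP_le hf hfnorm hJf₀, le_rfl⟩
    | succ k ih => exact (hnext k ih).1
  exact ⟨μ, fun k => ⟨(hinv k).1, (hinv k).2.2.1, (hinv k).2.2.2.1, (hnext k (hinv k)).2⟩⟩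

theorem isProxPt_smul_of_tendsto (hbot : ∀ w, J w ≠ ⊥) (hlsc : LowerSemicontinuous J)
    (hhom : AbsOneHom J) {as μ : ℕ → ℝ} {x y : ℕ → H} {a₀ μ₀ : ℝ} {x₀ : H}
    (h : ∀ n, IsProxPt J (as n) (x n) (y n))
    (hval : ∀ n, ProxObj J (as n) (x n) (y n) = (((2 : ℝ)⁻¹ * (1 - ‖y n‖ ^ 2) : ℝ) : EReal))
    (hJx : ∀ n, J (x n) = μ n) (has : Tendsto as atTop (𝓝 a₀)) (hμ : Tendsto μ atTop (𝓝 μ₀))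
    (hx : Tendsto x atTop (𝓝 x₀)) (hy : Tendsto (fun n => ‖y n‖) atTop (𝓝 (1 - a₀ * μ₀)))
    (hx₀ : ‖x₀‖ = 1) (ha₀ : 0 < a₀) (hlam : 0 < 1 - a₀ * μ₀) :
    IsProxPt J a₀ x₀ ((1 - a₀ * μ₀) • x₀) ∧ J x₀ = μ₀ := by
  have hJx₀ : J x₀ ≤ μ₀ := hlsc.le_of_tendsto hx <| by
    simpa only [Function.comp_def, hJx] using (continuous_coe_real_ereal.tendsto μ₀).comp hμ
  obtain ⟨j, hj⟩ : ∃ j : ℝ, J x₀ = j :=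
    ⟨_, (EReal.coe_toReal (hJx₀.trans_lt (EReal.coe_lt_top μ₀)).ne (hbot x₀)).symm⟩
  have hjμ₀ : j ≤ μ₀ := by rwa [hj, EReal.coe_le_coe_iff] at hJx₀
  have hprox : IsProxPt J a₀ x₀ ((1 - a₀ * μ₀) • x₀) := by
    refine IsProxPt.of_tendsto hbot h hval has hx
      (((hy.pow 2).const_sub 1).const_mul _) ha₀ ?_
    rw [ProxObj, hhom.map_smul_of_nonneg_s13 hlam.le hj, norm_smul_sub_self_of_norm_eq_one hx₀,
      sq_abs, ← EReal.coe_mul, ← EReal.coe_add, EReal.coe_le_coe_iff]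
    nlinarith [mul_le_mul_of_nonneg_left hjμ₀ (mul_nonneg ha₀.le hlam.le)]
  refine ⟨hprox, ?_⟩
  have hlam_eq := hprox.eq_one_sub_of_smul_self hhom hx₀ hlam hj
  rw [hj, mul_left_cancel₀ ha₀.ne' (by linarith : a₀ * j = a₀ * μ₀)]

end

section

variable {H : Type*} [NormedAddCommGroup H] [InnerProductSpace ℝ H] [CompleteSpace H]

theorem convergence_of_proximal_power_method_general
    (J : H → EReal) (hproper : ProperFn J) (hconv : ConvexFn J)
    (hlsc : LowerSemicontinuous J) (hhom : AbsOneHom J)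
    (cP : ℝ) (hcP : 0 < cP)
    (hpoincare : ∀ u : H, InNullPerp J u → ((cP * ‖u‖ : ℝ) : EReal) ≤ J u)
    (hcompact : ∀ t : ℝ, IsCompact {u : H | ((‖u‖ : ℝ) : EReal) + J u ≤ (t : EReal)})
    (f : H) (hf : InNullPerp J f) (hfnorm : ‖f‖ = 1)
    (hJffin : J f ≠ ⊤)
    (c : ℝ) (hc0 : 0 < c) (hc1 : c < 1)
    (α : H → ℝ)
    (hrule : (∀ u : H, (α u : EReal) = (c : EReal) / J f) ∨
             (∀ u : H, (α u : EReal) = (c : EReal) / J u))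
    (useq vseq : ℕ → H)
    (hinit : useq 0 = f)
    (hv : ∀ k, IsProxPt J (α (useq k)) (useq k) (vseq k))
    (hstep : ∀ k, useq (k + 1) = ‖vseq k‖⁻¹ • vseq k) :
    ∃ φ : ℕ → ℕ, StrictMono φ ∧ ∃ ustar : H,
      Filter.Tendsto (useq ∘ φ) Filter.atTop (nhds ustar) ∧ ‖ustar‖ = 1 ∧
      ∃ lam : ℝ, 0 < lam ∧ lam < 1 ∧ IsProxPt J (α ustar) ustar (lam • ustar) := by
  obtain ⟨hbot, -⟩ := hproper
  obtain ⟨μ, hiter⟩ := proxPowerMethod_iterates hbot hconv hhom hcP hpoincare hf hfnorm hJffin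
    hc0 hc1 hrule hinit hv hstep
  choose hunorm hJu hcPμ hμmono hlow hup hval using hiter
  have hbdd : BddBelow (Set.range μ) := ⟨cP, Set.forall_mem_range.2 hcPμ⟩
  set μs := ⨅ k, μ k
  have hμ : Tendsto μ atTop (𝓝 μs) := tendsto_atTop_ciInf (antitone_nat_of_succ_le hμmono) hbdd
  have hμs : 0 < μs := hcP.trans_le (le_ciInf hcPμ)
  obtain ⟨αs, hα, hαs, hαμ, hαeq⟩ :=
    ParameterRule.exists_tendsto hrule hc0 (hinit ▸ hJu 0) hJu hμ hμs (ciInf_le hbdd 0)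
  have hμ_succ : Tendsto (fun k => μ (k + 1)) atTop (𝓝 μs) :=
    hμ.comp (tendsto_add_atTop_nat 1)
  have hvnorm : Tendsto (fun k => ‖vseq k‖) atTop (𝓝 (1 - αs * μs)) :=
    tendsto_of_tendsto_of_tendsto_of_le_of_le (tendsto_const_nhds.sub (hα.mul hμ))
      (tendsto_const_nhds.sub (hα.mul hμ_succ)) hlow fun k => by linarith [hup k]
  obtain ⟨ustar, -, φ, hφ, hlim⟩ := (hcompact (1 + μ 0)).tendsto_subseq fun k => by
    rw [Set.mem_ofPred_eq, hunorm k, hJu k, ← EReal.coe_add, EReal.coe_le_coe_iff]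
    linarith [antitone_nat_of_succ_le hμmono (Nat.zero_le k)]
  have hnorm : ‖ustar‖ = 1 :=
    tendsto_nhds_unique hlim.norm (by simp only [Function.comp_def, hunorm, tendsto_const_nhds])
  have hlam : 0 < 1 - αs * μs := by linarith
  have hφ_top := hφ.tendsto_atTop
  obtain ⟨hprox, hJ⟩ := isProxPt_smul_of_tendsto hbot hlsc hhom (fun n => hv (φ n))
    (fun n => hval (φ n)) (fun n => hJu (φ n)) (hα.comp hφ_top) (hμ.comp hφ_top) hlim
    (hvnorm.comp hφ_top) hnorm hαs hlam
  exact ⟨φ, hφ, ustar, hlim, hnorm, 1 - αs * μs, hlam, by linarith [mul_pos hαs hμs],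
    hαeq ustar hJ ▸ hprox⟩

/-- **Convergence of the proximal power method.**
Let `J` be proper, convex, lsc, absolutely one-homogeneous, satisfying the
Poincaré inequality `c_P‖u‖ ≤ J(u)` on `N(J)^⊥` and having compact sublevel
sets of `‖·‖ + J(·)`. Let `(u^k)` be generated by the proximal power method
starting from `f ∈ N(J)^⊥` with `‖f‖ = 1`, `0 < J f < ∞`, with the constant
parameter rule `α(u) = c/J(u⁰)` or the variable parameter rule `α(u) = c/J(u)`
for a fixed `c ∈ (0,1)`. Then a subsequence of `(u^k)` converges in norm to
some `u*` with `‖u*‖ = 1` which is an eigenvector of the proximal operator: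
`λ • u* = prox_{α(u*)}^J(u*)` for some `0 < λ < 1`. -/
theorem convergence_of_proximal_power_method
    (J : H → EReal) (hproper : ProperFn J) (hconv : ConvexFn J)
    (hlsc : LowerSemicontinuous J) (hhom : AbsOneHom J)
    (cP : ℝ) (hcP : 0 < cP)
    (hpoincare : ∀ u : H, InNullPerp J u → ((cP * ‖u‖ : ℝ) : EReal) ≤ J u)
    (hcompact : ∀ t : ℝ, IsCompact {u : H | ((‖u‖ : ℝ) : EReal) + J u ≤ (t : EReal)})
    (f : H) (hf : InNullPerp J f) (hfnorm : ‖f‖ = 1)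
    (hJfpos : 0 < J f) (hJffin : J f ≠ ⊤)
    (c : ℝ) (hc0 : 0 < c) (hc1 : c < 1)
    (α : H → ℝ)
    (hrule : (∀ u : H, (α u : EReal) = (c : EReal) / J f) ∨
             (∀ u : H, (α u : EReal) = (c : EReal) / J u))
    (useq vseq : ℕ → H)
    (hinit : useq 0 = f)
    (hv : ∀ k, IsProxPt J (α (useq k)) (useq k) (vseq k))
    (hstep : ∀ k, useq (k + 1) = ‖vseq k‖⁻¹ • vseq k) :
    ∃ φ : ℕ → ℕ, StrictMono φ ∧ ∃ ustar : H,
      Filter.Tendsto (useq ∘ φ) Filter.atTop (nhds ustar) ∧ ‖ustar‖ = 1 ∧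
      ∃ lam : ℝ, 0 < lam ∧ lam < 1 ∧ IsProxPt J (α ustar) ustar (lam • ustar) :=
  convergence_of_proximal_power_method_general J hproper hconv hlsc hhom cP hcP hpoincare hcompact f
    hf hfnorm hJffin c hc0 hc1 α hrule useq vseq hinit hv hstep

end
end

section
/- Let T : ℝ² → ℝ² be the single-layer ReLU network T(u₁, u₂) = (max(1 − u₁, 0), max(u₂ − 1, 0)). Then the set of solutions (u, λ) of the eigenproblem T(u) = λ u is exactly the union of the following four families: (i) u = (α, 0) with 0 < α < 1 and λ = (1 − α)/α; (ii) u = (1/(1 + α), 1/(1 − α)) with 0 < α < 1 and λ = α; (iii) u = (α, 0) with α < 0 and λ = (1 − α)/α; (iv) u = (u₁, u₂) with u₁ ≥ 1 and u₂ ≤ 1, and λ = 0. -/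
/-!
Componentwise, `T u = λ • u` is a pair of scalar ReLU equations coupled only through `λ`.
For `λ = 0` both ReLUs must vanish, which is family (iv). For `λ ≠ 0` the first equation
forces `u₁ < 1` and `(1 + λ) u₁ = 1`, while the second forces `u₂ = 0` or `u₂ > 1` with
`(1 - λ) u₂ = 1`. The alternative `u₂ = 0` gives the axis families (i) and (iii), split by
the sign of `u₁`; the alternative `u₂ > 1` pins `λ` into `(0, 1)` and gives family (ii).
-/

variable {K : Type*} [Field K] [LinearOrder K] [IsStrictOrderedRing K]

theorem max_one_sub_zero_eq_mul_iff {lam x : K} (hlam : lam ≠ 0) :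
    max (1 - x) 0 = lam * x ↔ x < 1 ∧ lam * x = 1 - x := by
  constructor
  · intro h
    rcases le_or_gt (1 - x) 0 with hle | hlt
    · rw [max_eq_right hle, eq_comm, mul_eq_zero] at h
      obtain rfl := h.resolve_left hlam
      linarith
    · rw [max_eq_left hlt.le] at h
      exact ⟨by linarith, h.symm⟩
  · rintro ⟨hx, h⟩
    rw [max_eq_left (by linarith), h]

theorem max_sub_one_zero_eq_mul_iff {lam y : K} (hlam : lam ≠ 0) :
    max (y - 1) 0 = lam * y ↔ y = 0 ∨ 1 < y ∧ lam * y = y - 1 := by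
  constructor
  · intro h
    rcases le_or_gt (y - 1) 0 with hle | hlt
    · rw [max_eq_right hle, eq_comm, mul_eq_zero] at h
      exact Or.inl (h.resolve_left hlam)
    · rw [max_eq_left hlt.le] at h
      exact Or.inr ⟨by linarith, h.symm⟩
  · rintro (rfl | ⟨hy, h⟩)
    · simp
    · rw [max_eq_left (by linarith), h]

def toyRelu (u : K × K) : K × K := (max (1 - u.1) 0, max (u.2 - 1) 0)

theorem toyRelu_eq_zero_iff {u : K × K} : toyRelu u = 0 ↔ 1 ≤ u.1 ∧ u.2 ≤ 1 := by
  simp only [toyRelu, Prod.ext_iff, Prod.fst_zero, Prod.snd_zero, max_eq_right_iff,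
    sub_nonpos]

theorem toyRelu_eq_smul_iff {u : K × K} {lam : K} (hlam : lam ≠ 0) :
    toyRelu u = lam • u ↔
      (u.1 < 1 ∧ lam * u.1 = 1 - u.1) ∧ (u.2 = 0 ∨ 1 < u.2 ∧ lam * u.2 = u.2 - 1) := by
  rw [Prod.ext_iff]
  exact and_congr (max_one_sub_zero_eq_mul_iff hlam) (max_sub_one_zero_eq_mul_iff hlam)

theorem toyRelu_axis_eq_smul {α : K} (h0 : α ≠ 0) (h1 : α < 1) :
    toyRelu (α, 0) = ((1 - α) / α) • (α, 0) := by
  rw [toyRelu_eq_smul_iff (div_ne_zero (sub_ne_zero.2 h1.ne') h0)]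
  exact ⟨⟨h1, div_mul_cancel₀ _ h0⟩, Or.inl rfl⟩

theorem toyRelu_interior_eq_smul {α : K} (h0 : 0 < α) (h1 : α < 1) :
    toyRelu (1 / (1 + α), 1 / (1 - α)) = α • (1 / (1 + α), 1 / (1 - α)) := by
  have hp : 0 < 1 + α := by linarith
  have hm : 0 < 1 - α := by linarith
  rw [toyRelu_eq_smul_iff h0.ne']
  refine ⟨⟨?_, ?_⟩, Or.inr ⟨?_, ?_⟩⟩
  · rw [div_lt_one hp]; linarith
  · field_simp; ring
  · rw [one_lt_div hm]; linarith
  · field_simp; ring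

theorem eq_interior_of_eigen_equations {lam x y : K} (hx : lam * x = 1 - x) (hy1 : 1 < y)
    (hy : lam * y = y - 1) : 0 < lam ∧ lam < 1 ∧ (x, y) = (1 / (1 + lam), 1 / (1 - lam)) := by
  have hlam0 : 0 < lam := by nlinarith
  have hlam1 : lam < 1 := by nlinarith
  refine ⟨hlam0, hlam1, Prod.ext ?_ ?_⟩
  · rw [eq_div_iff (by linarith)]; linarith
  · rw [eq_div_iff (by linarith)]; linarith

/-- **Eigenvectors of a toy 2-pixel ReLU network.**
Let `T : ℝ² → ℝ²`, `T (u₁, u₂) = (max (1 - u₁) 0, max (u₂ - 1) 0)`. The set of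
solutions `(u, λ)` of the eigenproblem `T u = λ • u` is exactly the union of:
(i) `u = (α, 0)`, `0 < α < 1`, `λ = (1 - α)/α`;
(ii) `u = (1/(1+α), 1/(1-α))`, `0 < α < 1`, `λ = α`;
(iii) `u = (α, 0)`, `α < 0`, `λ = (1 - α)/α`;
(iv) `u₁ ≥ 1`, `u₂ ≤ 1`, `λ = 0`. -/
theorem toy_relu_network_eigenvectors
    (T : ℝ × ℝ → ℝ × ℝ) (hT : ∀ u : ℝ × ℝ, T u = (max (1 - u.1) 0, max (u.2 - 1) 0))
    (u : ℝ × ℝ) (lam : ℝ) :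
    T u = lam • u ↔
      ((∃ α : ℝ, 0 < α ∧ α < 1 ∧ u = (α, 0) ∧ lam = (1 - α) / α) ∨
       (∃ α : ℝ, 0 < α ∧ α < 1 ∧ u = (1 / (1 + α), 1 / (1 - α)) ∧ lam = α) ∨
       (∃ α : ℝ, α < 0 ∧ u = (α, 0) ∧ lam = (1 - α) / α) ∨
       (1 ≤ u.1 ∧ u.2 ≤ 1 ∧ lam = 0)) := by
  obtain rfl : T = toyRelu := funext hT
  constructor
  · intro h
    rcases eq_or_ne lam 0 with rfl | hlam
    · rw [zero_smul, toyRelu_eq_zero_iff] at h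
      exact Or.inr (Or.inr (Or.inr ⟨h.1, h.2, rfl⟩))
    obtain ⟨⟨hx1, hx⟩, hy0 | ⟨hy1, hy⟩⟩ := (toyRelu_eq_smul_iff hlam).1 h
    · have hx0 : u.1 ≠ 0 := by rintro h0; rw [h0, mul_zero] at hx; linarith
      have hu : u = (u.1, 0) := Prod.ext rfl hy0
      have hlam' : lam = (1 - u.1) / u.1 := by rw [eq_div_iff hx0]; linarith
      rcases hx0.lt_or_gt with hneg | hpos
      · exact Or.inr (Or.inr (Or.inl ⟨u.1, hneg, hu, hlam'⟩))
      · exact Or.inl ⟨u.1, hpos, hx1, hu, hlam'⟩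
    · obtain ⟨h0, h1, hu⟩ := eq_interior_of_eigen_equations hx hy1 hy
      exact Or.inr (Or.inl ⟨lam, h0, h1, hu, rfl⟩)
  · rintro (⟨α, h0, h1, rfl, rfl⟩ | ⟨α, h0, h1, rfl, rfl⟩ | ⟨α, h0, rfl, rfl⟩ | ⟨h1, h2, rfl⟩)
    · exact toyRelu_axis_eq_smul h0.ne' h1
    · exact toyRelu_interior_eq_smul h0 h1
    · exact toyRelu_axis_eq_smul h0.ne (h0.trans one_pos)
    · rw [zero_smul, toyRelu_eq_zero_iff]
      exact ⟨h1, h2⟩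
end
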